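/- arXiv:1107.5887 — 7 statements merged into one kernel-verified Lean document; each statement's English description precedes it below -/
import Mathlib

section
/- Let G : [0,∞) → [0,∞) be continuous with b := ∫₀^∞ t·G(t) dt < ∞, and let h : [0,∞) → ℝ be twice continuously differentiable with h''(r) = G(r)·h(r), h(0) = 0, h'(0) = 1. Then the limit α := lim_{r→∞} h(r)/r exists, is finite, equals lim_{r→∞} h'(r), and satisfies 1 + b ≤ α ≤ e^b. -/
/-!
Continuous induction shows that `h ≥ 0` on `[0, ∞)`: as long as `h ≥ 0`, `h'' = G h ≥ 0` keeps
`h' ≥ 1`, which keeps `h` increasing. Hence `h'` is nondecreasing, so `h` is convex with `h 0 = 0`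
and `r ≤ h r ≤ r h'(r)`. Integrating `h'' = G h` with `h t ≥ t` gives `h'(r) ≥ 1 + ∫₀^r t G`, and
integrating `(log h')' = G h / h' ≤ t G` gives `h'(r) ≤ exp ∫₀^r t G ≤ e^b`. So `h'` increases to
a limit `α ∈ [1 + b, e^b]`, and the secant bounds of the convex `h` squeeze `h r / r` to `α`.
-/

open Set Filter MeasureTheory Topology

theorem monotoneOn_of_hasDerivWithinAt_nonneg_of_subset {f f' : ℝ → ℝ} {s D : Set ℝ}
    (hD : Convex ℝ D) (hDs : D ⊆ s) (hf : ∀ x ∈ D, HasDerivWithinAt f (f' x) s x)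
    (hf' : ∀ x ∈ interior D, 0 ≤ f' x) : MonotoneOn f D :=
  monotoneOn_of_hasDerivWithinAt_nonneg hD
    (fun x hx => (hf x hx).continuousWithinAt.mono hDs)
    (fun x hx => (hf x (interior_subset hx)).mono (interior_subset.trans hDs)) hf'

theorem integral_eq_sub_of_hasDerivWithinAt_Ici {f f' : ℝ → ℝ} {a b : ℝ} (hab : a ≤ b)
    (hf : ∀ x ∈ Ici a, HasDerivWithinAt f (f' x) (Ici a) x) (hf' : ContinuousOn f' (Ici a)) :
    ∫ x in a..b, f' x = f b - f a :=
  intervalIntegral.integral_eq_sub_of_hasDeriv_right_of_le hab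
    (fun x hx => (hf x hx.1).continuousWithinAt.mono Icc_subset_Ici_self)
    (fun x hx => (hf x hx.1.le).mono (Ioi_subset_Ici hx.1.le))
    ((hf'.mono Icc_subset_Ici_self).intervalIntegrable_of_Icc hab)

theorem exists_tendsto_atTop_of_monotoneOn_Ici {f : ℝ → ℝ} {a C : ℝ}
    (hf : MonotoneOn f (Ici a)) (hC : ∀ x ∈ Ici a, f x ≤ C) :
    ∃ l, Tendsto f atTop (𝓝 l) ∧ l ≤ C := by
  set g : ℝ → ℝ := fun x => f (max x a)
  have hg : Monotone g := fun x y hxy =>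
    hf (le_max_right x a) (le_max_right y a) (max_le_max_right a hxy)
  have hgC : ∀ x, g x ≤ C := fun x => hC _ (le_max_right x a)
  refine ⟨⨆ x, g x, (tendsto_atTop_ciSup hg ⟨C, ?_⟩).congr' ?_, ciSup_le hgC⟩
  · rintro _ ⟨x, rfl⟩
    exact hgC x
  · filter_upwards [eventually_ge_atTop a] with x hx
    simp only [g, max_eq_left hx]

theorem MonotoneOn.le_of_tendsto_atTop_Ici {f : ℝ → ℝ} {a l : ℝ}
    (hf : MonotoneOn f (Ici a)) (hl : Tendsto f atTop (𝓝 l)) {x : ℝ} (hx : x ∈ Ici a) :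
    f x ≤ l :=
  ge_of_tendsto hl <| (eventually_ge_atTop x).mono fun _ hy => hf hx (le_trans hx hy) hy

theorem intervalIntegral_le_integral_Ioi {f : ℝ → ℝ} {a b : ℝ} (hab : a ≤ b)
    (hf : IntegrableOn f (Ioi a)) (hf₀ : ∀ x ∈ Ioi a, 0 ≤ f x) :
    ∫ x in a..b, f x ≤ ∫ x in Ioi a, f x := by
  rw [intervalIntegral.integral_of_le hab]
  exact setIntegral_mono_set hf ((ae_restrict_mem measurableSet_Ioi).mono hf₀)
    Ioc_subset_Ioi_self.eventuallyLE

section MonotoneDeriv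

variable {f f' : ℝ → ℝ} {a : ℝ}

theorem mul_sub_le_sub_of_monotoneOn_deriv
    (hf : ∀ x ∈ Ici a, HasDerivWithinAt f (f' x) (Ici a) x) (hf' : MonotoneOn f' (Ici a))
    {s r : ℝ} (hs : a ≤ s) (hsr : s ≤ r) : f' s * (r - s) ≤ f r - f s := by
  have hsub : Icc s r ⊆ Ici a := fun x hx => hs.trans hx.1
  have : MonotoneOn (fun x => f x - f' s * x) (Icc s r) := by
    refine monotoneOn_of_hasDerivWithinAt_nonneg_of_subset (convex_Icc s r) hsub
      (fun x hx => ((hf x (hsub hx)).sub ((hasDerivWithinAt_id x _).const_mul (f' s)))) ?_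
    rw [interior_Icc]
    intro x hx
    simpa using hf' hs (hs.trans hx.1.le) hx.1.le
  have := this (left_mem_Icc.2 hsr) (right_mem_Icc.2 hsr) hsr
  linarith

theorem sub_le_mul_sub_of_monotoneOn_deriv
    (hf : ∀ x ∈ Ici a, HasDerivWithinAt f (f' x) (Ici a) x) (hf' : MonotoneOn f' (Ici a))
    {s r : ℝ} (hs : a ≤ s) (hsr : s ≤ r) : f r - f s ≤ f' r * (r - s) := by
  have hsub : Icc s r ⊆ Ici a := fun x hx => hs.trans hx.1
  have : MonotoneOn (fun x => f' r * x - f x) (Icc s r) := by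
    refine monotoneOn_of_hasDerivWithinAt_nonneg_of_subset (convex_Icc s r) hsub
      (fun x hx => (((hasDerivWithinAt_id x _).const_mul (f' r)).sub (hf x (hsub hx)))) ?_
    rw [interior_Icc]
    intro x hx
    simpa using hf' (hs.trans hx.1.le) (hs.trans hsr) hx.2.le
  have := this (left_mem_Icc.2 hsr) (right_mem_Icc.2 hsr) hsr
  linarith

theorem tendsto_div_atTop_of_monotoneOn_deriv
    (hf : ∀ x ∈ Ici a, HasDerivWithinAt f (f' x) (Ici a) x) (hf' : MonotoneOn f' (Ici a))
    {l : ℝ} (hl : Tendsto f' atTop (𝓝 l)) : Tendsto (fun r => f r / r) atTop (𝓝 l) := by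
  have hdiv : ∀ c : ℝ, Tendsto (fun r : ℝ => c / r) atTop (𝓝 0) := fun c =>
    tendsto_const_nhds.div_atTop tendsto_id
  refine tendsto_order.2 ⟨fun m hm => ?_, fun M hM => ?_⟩
  · obtain ⟨s, hms, has⟩ := ((hl.eventually_const_lt hm).and (eventually_ge_atTop a)).exists
    have hlow : Tendsto (fun r => f s / r + f' s * (1 - s / r)) atTop (𝓝 (f' s)) := by
      simpa using (hdiv (f s)).add
        ((tendsto_const_nhds (x := f' s)).mul ((tendsto_const_nhds (x := (1:ℝ))).sub (hdiv s)))
    filter_upwards [hlow.eventually_const_lt hms, eventually_ge_atTop s,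
      eventually_gt_atTop 0] with r hr hsr hr0
    have := mul_sub_le_sub_of_monotoneOn_deriv hf hf' has hsr
    calc m < f s / r + f' s * (1 - s / r) := hr
      _ = (f s + f' s * (r - s)) / r := by field_simp
      _ ≤ f r / r := by gcongr; linarith
  · have hup : Tendsto (fun r => (f a - l * a) / r + l) atTop (𝓝 l) := by
      simpa using (hdiv (f a - l * a)).add_const l
    filter_upwards [hup.eventually_lt_const hM, eventually_ge_atTop a,
      eventually_gt_atTop 0] with r hr har hr0
    have h1 := sub_le_mul_sub_of_monotoneOn_deriv hf hf' le_rfl har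
    have h2 : f' r ≤ l := hf'.le_of_tendsto_atTop_Ici hl har
    calc f r / r ≤ (f a - l * a) / r + l := by
          rw [div_add' _ _ _ hr0.ne', div_le_div_iff_of_pos_right hr0]; nlinarith
      _ < M := hr

end MonotoneDeriv

section ODE

variable {G h h' : ℝ → ℝ}

theorem nonneg_and_deriv_ge_of_ode (hG : ∀ r ∈ Ici (0:ℝ), 0 ≤ G r)
    (hh : ∀ r ∈ Ici (0:ℝ), HasDerivWithinAt h (h' r) (Ici 0) r)
    (hh' : ∀ r ∈ Ici (0:ℝ), HasDerivWithinAt h' (G r * h r) (Ici 0) r)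
    (h0 : 0 ≤ h 0) (h'0 : 0 < h' 0) {r : ℝ} (hr : r ∈ Ici (0:ℝ)) :
    0 ≤ h r ∧ h' 0 ≤ h' r := by
  set S := {x | 0 ≤ h x ∧ h' 0 ≤ h' x}
  suffices Icc 0 r ⊆ S from this ⟨hr, le_rfl⟩
  have hS : IsClosed (S ∩ Icc 0 r) := by
    have hIcc : Icc 0 r ⊆ Ici (0:ℝ) := Icc_subset_Ici_self
    convert (isClosed_Icc.isClosed_le continuousOn_const
      (fun x hx => (hh x (hIcc hx)).continuousWithinAt.mono hIcc)).inter
      (isClosed_Icc.isClosed_le continuousOn_const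
      (fun x hx => (hh' x (hIcc hx)).continuousWithinAt.mono hIcc)) using 1
    ext x
    simp only [S, mem_inter_iff, mem_ofPred_eq]
    tauto
  refine hS.Icc_subset_of_forall_mem_nhdsWithin ⟨h0, le_rfl⟩ fun x ⟨⟨hhx, hh'x⟩, hx, _⟩ => ?_
  -- `h' > 0` to the right of `x` makes `h` increase, hence stay nonnegative, so `h'' ≥ 0` there.
  obtain ⟨u, hxu, hpos⟩ : ∃ u ∈ Ioi x, Ico x u ⊆ {y | 0 < h' y} :=
    mem_nhdsGE_iff_exists_Ico_subset.1 <| nhdsWithin_mono x (Ici_subset_Ici.2 hx) <|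
      (hh' x hx).continuousWithinAt.eventually_const_lt (h'0.trans_le hh'x)
  have hsub : Ico x u ⊆ Ici 0 := fun y hy => hx.trans hy.1
  have hmono : MonotoneOn h (Ico x u) :=
    monotoneOn_of_hasDerivWithinAt_nonneg_of_subset (convex_Ico x u) hsub
      (fun y hy => hh y (hsub hy)) fun y hy => (hpos (interior_subset hy)).le
  have hnonneg : ∀ y ∈ Ico x u, 0 ≤ h y := fun y hy =>
    hhx.trans (hmono (left_mem_Ico.2 hxu) hy hy.1)
  have hmono' : MonotoneOn h' (Ico x u) :=
    monotoneOn_of_hasDerivWithinAt_nonneg_of_subset (convex_Ico x u) hsub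
      (fun y hy => hh' y (hsub hy)) fun y hy =>
        mul_nonneg (hG y (hsub (interior_subset hy))) (hnonneg y (interior_subset hy))
  refine mem_of_superset (Ioo_mem_nhdsGT hxu) fun y hy => ?_
  exact ⟨hnonneg y (Ioo_subset_Ico_self hy),
    hh'x.trans (hmono' (left_mem_Ico.2 hxu) (Ioo_subset_Ico_self hy) hy.1.le)⟩

theorem integral_mul_le_deriv_sub (hGc : ContinuousOn G (Ici 0)) (hG : ∀ r ∈ Ici (0:ℝ), 0 ≤ G r)
    (hhc : ContinuousOn h (Ici 0))
    (hh' : ∀ r ∈ Ici (0:ℝ), HasDerivWithinAt h' (G r * h r) (Ici 0) r)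
    (hid : ∀ t ∈ Ici (0:ℝ), t ≤ h t) {r : ℝ} (hr : 0 ≤ r) :
    ∫ t in 0..r, t * G t ≤ h' r - h' 0 := by
  rw [← integral_eq_sub_of_hasDerivWithinAt_Ici hr hh' (hGc.mul hhc)]
  refine intervalIntegral.integral_mono_on hr
    (((continuousOn_id.mul hGc).mono Icc_subset_Ici_self).intervalIntegrable_of_Icc hr)
    (((hGc.mul hhc).mono Icc_subset_Ici_self).intervalIntegrable_of_Icc hr) fun t ht => ?_
  rw [mul_comm (G t)]
  exact mul_le_mul_of_nonneg_right (hid t ht.1) (hG t ht.1)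

theorem log_deriv_sub_le_integral (hGc : ContinuousOn G (Ici 0)) (hG : ∀ r ∈ Ici (0:ℝ), 0 ≤ G r)
    (hhc : ContinuousOn h (Ici 0))
    (hh' : ∀ r ∈ Ici (0:ℝ), HasDerivWithinAt h' (G r * h r) (Ici 0) r)
    (hpos : ∀ t ∈ Ici (0:ℝ), 0 < h' t) (hle : ∀ t ∈ Ici (0:ℝ), h t ≤ t * h' t)
    {r : ℝ} (hr : 0 ≤ r) :
    Real.log (h' r) - Real.log (h' 0) ≤ ∫ t in 0..r, t * G t := by
  have hh'c : ContinuousOn h' (Ici 0) := fun x hx => (hh' x hx).continuousWithinAt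
  rw [← integral_eq_sub_of_hasDerivWithinAt_Ici hr (fun x hx => (hh' x hx).log (hpos x hx).ne')
    ((hGc.mul hhc).div hh'c fun x hx => (hpos x hx).ne')]
  refine intervalIntegral.integral_mono_on hr
    ((((hGc.mul hhc).div hh'c fun x hx => (hpos x hx).ne').mono
      Icc_subset_Ici_self).intervalIntegrable_of_Icc hr)
    (((continuousOn_id.mul hGc).mono Icc_subset_Ici_self).intervalIntegrable_of_Icc hr)
    fun t ht => ?_
  rw [div_le_iff₀ (hpos t ht.1)]
  linarith [mul_le_mul_of_nonneg_left (hle t ht.1) (hG t ht.1)]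

end ODE

theorem stmt_1_general (G h h' h'' : ℝ → ℝ) (b : ℝ)
    (hGcont : ContinuousOn G (Ici 0))
    (hGnonneg : ∀ r ∈ Ici (0:ℝ), 0 ≤ G r)
    (hGint : IntegrableOn (fun t => t * G t) (Ioi 0))
    (hb : b = ∫ t in Ioi (0:ℝ), t * G t)
    (hd1 : ∀ r ∈ Ici (0:ℝ), HasDerivWithinAt h (h' r) (Ici 0) r)
    (hd2 : ∀ r ∈ Ici (0:ℝ), HasDerivWithinAt h' (h'' r) (Ici 0) r)
    (hode : ∀ r ∈ Ici (0:ℝ), h'' r = G r * h r)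
    (h0 : h 0 = 0) (h'0 : h' 0 = 1) :
    ∃ α : ℝ, Tendsto (fun r => h r / r) atTop (nhds α) ∧
      Tendsto h' atTop (nhds α) ∧ 1 + b ≤ α ∧ α ≤ Real.exp b := by
  have hd2' : ∀ r ∈ Ici (0:ℝ), HasDerivWithinAt h' (G r * h r) (Ici 0) r := fun r hr =>
    hode r hr ▸ hd2 r hr
  have hhc : ContinuousOn h (Ici 0) := fun r hr => (hd1 r hr).continuousWithinAt
  have hsign := fun r (hr : r ∈ Ici (0:ℝ)) =>
    nonneg_and_deriv_ge_of_ode hGnonneg hd1 hd2' h0.ge (h'0 ▸ one_pos) hr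
  have hmono : MonotoneOn h' (Ici 0) :=
    monotoneOn_of_hasDerivWithinAt_nonneg_of_subset (convex_Ici 0) subset_rfl hd2' fun r hr =>
      mul_nonneg (hGnonneg r (interior_subset hr)) (hsign r (interior_subset hr)).1
  have hid : ∀ r ∈ Ici (0:ℝ), r ≤ h r := fun r hr => by
    simpa [h0, h'0] using mul_sub_le_sub_of_monotoneOn_deriv hd1 hmono le_rfl hr
  have hle : ∀ r ∈ Ici (0:ℝ), h r ≤ r * h' r := fun r hr => by
    simpa [h0, mul_comm] using sub_le_mul_sub_of_monotoneOn_deriv hd1 hmono le_rfl hr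
  have hpos : ∀ r ∈ Ici (0:ℝ), 0 < h' r := fun r hr => one_pos.trans_le (h'0 ▸ (hsign r hr).2)
  have hintegral_le : ∀ r ∈ Ici (0:ℝ), ∫ t in 0..r, t * G t ≤ b := fun r hr =>
    hb ▸ intervalIntegral_le_integral_Ioi hr hGint fun t (ht : 0 < t) =>
      mul_nonneg ht.le (hGnonneg t ht.le)
  obtain ⟨α, hα, hαb⟩ := exists_tendsto_atTop_of_monotoneOn_Ici hmono fun r hr => by
    have := log_deriv_sub_le_integral hGcont hGnonneg hhc hd2' hpos hle hr
    rw [h'0, Real.log_one, sub_zero] at this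
    exact (Real.log_le_iff_le_exp (hpos r hr)).1 (this.trans (hintegral_le r hr))
  refine ⟨α, tendsto_div_atTop_of_monotoneOn_deriv hd1 hmono hα, hα, ?_, hαb⟩
  refine le_of_tendsto_of_tendsto
    (tendsto_const_nhds.add (hb ▸ intervalIntegral_tendsto_integral_Ioi 0 hGint tendsto_id)) hα
    ((eventually_ge_atTop 0).mono fun r hr => ?_)
  show 1 + ∫ t in 0..r, t * G t ≤ h' r
  linarith [h'0 ▸ integral_mul_le_deriv_sub hGcont hGnonneg hhc hd2' hid hr]

/-- For the comparison ODE `h'' = G h`, `h 0 = 0`, `h' 0 = 1`, with `G` continuous,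
nonnegative, and `b = ∫₀^∞ t G(t) dt < ∞`, the limit `α = lim_{r→∞} h r / r` exists, is
finite, equals `lim h'`, and satisfies `1 + b ≤ α ≤ e^b`. -/
theorem stmt_1 (G h h' h'' : ℝ → ℝ) (b : ℝ)
    (hGcont : ContinuousOn G (Ici 0))
    (hGnonneg : ∀ r ∈ Ici (0:ℝ), 0 ≤ G r)
    (hGint : IntegrableOn (fun t => t * G t) (Ioi 0))
    (hb : b = ∫ t in Ioi (0:ℝ), t * G t)
    (hd1 : ∀ r ∈ Ici (0:ℝ), HasDerivWithinAt h (h' r) (Ici 0) r)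
    (hd2 : ∀ r ∈ Ici (0:ℝ), HasDerivWithinAt h' (h'' r) (Ici 0) r)
    (hcont : ContinuousOn h'' (Ici 0))
    (hode : ∀ r ∈ Ici (0:ℝ), h'' r = G r * h r)
    (h0 : h 0 = 0) (h'0 : h' 0 = 1) :
    ∃ α : ℝ, Tendsto (fun r => h r / r) atTop (nhds α) ∧
      Tendsto h' atTop (nhds α) ∧ 1 + b ≤ α ∧ α ≤ Real.exp b :=
  stmt_1_general G h h' h'' b hGcont hGnonneg hGint hb hd1 hd2 hode h0 h'0
end

section
/- Let n ≥ 1 be a natural number, q > 1 a real number with n·(q−1) > q. Let (X,d) be a metric space, o ∈ X, and μ a Borel measure on X such that there is a constant C with μ(B(o,r)) ≤ C·rⁿ for all r > 0 and such that lim_{r→∞} μ(B(o,r))/rⁿ = ν. Then lim_{λ→∞} ∫_X λ^{n(q−1)} · (λ^q + d(o,x)^q)^{−n} dμ(x) = ν · n·q·∫₀^∞ ρ^{n+q−1}·(1+ρ^q)^{−(n+1)} dρ. -/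
/-!
Since `(1 + c ^ q) ^ (-n) = ∫_c^∞ w` for `w = -(d/dρ) (1 + ρ ^ q) ^ (-n)`, Tonelli's theorem (a
layer-cake formula) rewrites the integral as `∫_0^∞ w(ρ) ρⁿ · μ(B(o, λρ)) / (λρ)ⁿ dρ`. The ratio in
this integrand is bounded by `C` and tends to `ν` as `λ → ∞`, so dominated convergence gives the
limit `ν ∫_0^∞ w(ρ) ρⁿ dρ`.
-/

open Set Filter MeasureTheory

open Topology Metric
open scoped ENNReal

noncomputable def radialKernel (s q ρ : ℝ) : ℝ :=
  s * q * ρ ^ (q - 1) * (1 + ρ ^ q) ^ (-(s + 1))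

lemma radialKernel_nonneg {s q ρ : ℝ} (hs : 0 ≤ s) (hq : 0 ≤ q) (hρ : 0 ≤ ρ) :
    0 ≤ radialKernel s q ρ := by
  unfold radialKernel; positivity

lemma measurable_radialKernel (s q : ℝ) : Measurable (radialKernel s q) := by
  unfold radialKernel; fun_prop

lemma hasDerivAt_neg_one_add_rpow_rpow_neg (s q : ℝ) {x : ℝ} (hx : 0 < x) :
    HasDerivAt (fun ρ : ℝ => -(1 + ρ ^ q) ^ (-s)) (radialKernel s q x) x := by
  have hbase : HasDerivAt (fun ρ : ℝ => 1 + ρ ^ q) (q * x ^ (q - 1)) x :=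
    (Real.hasDerivAt_rpow_const (Or.inl hx.ne')).const_add 1
  refine (hbase.rpow_const (Or.inl (by positivity))).neg.congr_deriv ?_
  unfold radialKernel
  rw [show -s - 1 = -(s + 1) by ring]
  ring

lemma tendsto_neg_one_add_rpow_rpow_neg {s q : ℝ} (hs : 0 < s) (hq : 0 < q) :
    Tendsto (fun ρ : ℝ => -(1 + ρ ^ q) ^ (-s)) atTop (𝓝 0) := by
  have h := (tendsto_rpow_neg_atTop hs).comp
    (tendsto_atTop_add_const_left _ 1 (tendsto_rpow_atTop hq))
  simpa using h.neg

lemma continuousAt_neg_one_add_rpow_rpow_neg (s : ℝ) {q c : ℝ} (hq : 0 < q) (hc : 0 ≤ c) :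
    ContinuousAt (fun ρ : ℝ => -(1 + ρ ^ q) ^ (-s)) c :=
  ((continuousAt_const.add (Real.continuousAt_rpow_const c q (Or.inr hq.le))).rpow_const
    (Or.inl (by positivity : (0:ℝ) < 1 + c ^ q).ne')).neg

lemma integrableOn_Ioi_radialKernel {s q c : ℝ} (hs : 0 < s) (hq : 0 < q) (hc : 0 ≤ c) :
    IntegrableOn (radialKernel s q) (Ioi c) :=
  integrableOn_Ioi_deriv_of_nonneg
    (continuousAt_neg_one_add_rpow_rpow_neg s hq hc).continuousWithinAt
    (fun _ hx => hasDerivAt_neg_one_add_rpow_rpow_neg s q (hc.trans_lt hx))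
    (fun _ hx => radialKernel_nonneg hs.le hq.le (hc.trans hx.out.le))
    (tendsto_neg_one_add_rpow_rpow_neg hs hq)

lemma lintegral_Ioi_radialKernel {s q c : ℝ} (hs : 0 < s) (hq : 0 < q) (hc : 0 ≤ c) :
    ∫⁻ ρ in Ioi c, ENNReal.ofReal (radialKernel s q ρ) = ENNReal.ofReal ((1 + c ^ q) ^ (-s)) := by
  have hint := integrableOn_Ioi_radialKernel hs hq hc
  rw [← ofReal_integral_eq_lintegral_ofReal hint ((ae_restrict_mem measurableSet_Ioi).mono
      fun _ hx => radialKernel_nonneg hs.le hq.le (hc.trans hx.out.le)),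
    integral_Ioi_of_hasDerivAt_of_tendsto
      (continuousAt_neg_one_add_rpow_rpow_neg s hq hc).continuousWithinAt
      (fun _ hx => hasDerivAt_neg_one_add_rpow_rpow_neg s q (hc.trans_lt hx)) hint
      (tendsto_neg_one_add_rpow_rpow_neg hs hq),
    zero_sub, neg_neg]

lemma lintegral_setLIntegral_Ioi_eq_lintegral_mul_measure_lt {X : Type*} [MeasurableSpace X]
    (μ : Measure X) [SFinite μ] {g : X → ℝ} (hg : Measurable g) {W : ℝ → ℝ≥0∞}
    (hW : Measurable W) :
    ∫⁻ x, (∫⁻ ρ in Ioi (g x), W ρ) ∂μ = ∫⁻ ρ, W ρ * μ {x | g x < ρ} := by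
  set S : Set (X × ℝ) := {p | g p.1 < p.2}
  have hS : MeasurableSet S := measurableSet_lt (hg.comp measurable_fst) measurable_snd
  calc ∫⁻ x, (∫⁻ ρ in Ioi (g x), W ρ) ∂μ
      = ∫⁻ x, (∫⁻ ρ, S.indicator (fun p => W p.2) (x, ρ)) ∂μ := by
        refine lintegral_congr fun x => ?_
        rw [← lintegral_indicator measurableSet_Ioi]
        rfl
    _ = ∫⁻ ρ, ∫⁻ x, S.indicator (fun p => W p.2) (x, ρ) ∂μ :=
        lintegral_lintegral_swap ((hW.comp measurable_snd).indicator hS).aemeasurable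
    _ = ∫⁻ ρ, W ρ * μ {x | g x < ρ} := by
        refine lintegral_congr fun ρ => ?_
        rw [← lintegral_indicator_const (measurableSet_lt hg measurable_const)]
        rfl

lemma rpow_mul_rpow_add_rpow_rpow_neg {lam d : ℝ} (hlam : 0 < lam) (hd : 0 ≤ d) (s q : ℝ) :
    lam ^ (s * (q - 1)) * (lam ^ q + d ^ q) ^ (-s)
      = lam ^ (-s) * (1 + (d / lam) ^ q) ^ (-s) := by
  have hfactor : lam ^ q + d ^ q = lam ^ q * (1 + (d / lam) ^ q) := by
    rw [Real.div_rpow hd hlam.le]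
    field_simp
  rw [hfactor, Real.mul_rpow (by positivity) (by positivity), ← Real.rpow_mul hlam.le,
    ← mul_assoc, ← Real.rpow_add hlam, show s * (q - 1) + q * -s = -s by ring]

-- `ρ ^ s ≤ (1 + ρ ^ q) ^ (s / q)` bounds the integrand by the kernel of exponent `s (q - 1) / q`.
lemma integrableOn_Ioi_rpow_mul_one_add_rpow_rpow_neg {s q : ℝ} (hs : 0 < s) (hq : 1 < q) :
    IntegrableOn (fun ρ : ℝ => ρ ^ (s + q - 1) * (1 + ρ ^ q) ^ (-(s + 1))) (Ioi 0) := by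
  have hq0 : 0 < q := by linarith
  set t := s * (q - 1) / q with ht_def
  have ht : 0 < t := div_pos (mul_pos hs (sub_pos.2 hq)) hq0
  refine ((integrableOn_Ioi_radialKernel ht hq0 le_rfl).const_mul (t * q)⁻¹).mono'
    (by fun_prop : Measurable _).aestronglyMeasurable ?_
  filter_upwards [ae_restrict_mem measurableSet_Ioi] with ρ (hρ : 0 < ρ)
  have hA : 0 < 1 + ρ ^ q := by positivity
  have hpow : ρ ^ s ≤ (1 + ρ ^ q) ^ (s / q) :=
    calc ρ ^ s = (ρ ^ q) ^ (s / q) := by rw [← Real.rpow_mul hρ.le, mul_div_cancel₀ _ hq0.ne']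
      _ ≤ (1 + ρ ^ q) ^ (s / q) := Real.rpow_le_rpow (by positivity) (by linarith) (by positivity)
  rw [Real.norm_of_nonneg (by positivity)]
  calc ρ ^ (s + q - 1) * (1 + ρ ^ q) ^ (-(s + 1))
      = ρ ^ (q - 1) * ρ ^ s * (1 + ρ ^ q) ^ (-(s + 1)) := by
        rw [← Real.rpow_add hρ, show q - 1 + s = s + q - 1 by ring]
    _ ≤ ρ ^ (q - 1) * (1 + ρ ^ q) ^ (s / q) * (1 + ρ ^ q) ^ (-(s + 1)) := by gcongr
    _ = (t * q)⁻¹ * radialKernel t q ρ := by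
        unfold radialKernel
        rw [mul_assoc (ρ ^ (q - 1)), ← Real.rpow_add hA,
          show s / q + -(s + 1) = -(t + 1) by rw [ht_def]; field_simp; ring]
        field_simp

lemma tendsto_setIntegral_Ioi_mul_comp_mul_atTop {k m : ℝ → ℝ} {ν M : ℝ}
    (hk : IntegrableOn k (Ioi 0)) (hm_meas : Measurable m) (hm_bdd : ∀ r > (0:ℝ), ‖m r‖ ≤ M)
    (hm : Tendsto m atTop (𝓝 ν)) :
    Tendsto (fun lam => ∫ ρ in Ioi 0, k ρ * m (lam * ρ)) atTop (𝓝 (ν * ∫ ρ in Ioi 0, k ρ)) := by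
  rw [mul_comm, ← integral_mul_const]
  refine tendsto_integral_filter_of_dominated_convergence (fun ρ => ‖k ρ‖ * M)
    (Eventually.of_forall fun lam =>
      hk.aestronglyMeasurable.mul (hm_meas.comp (measurable_const_mul lam)).aestronglyMeasurable)
    ?_ (hk.norm.mul_const M) ?_
  · filter_upwards [eventually_gt_atTop 0] with lam hlam
    filter_upwards [ae_restrict_mem measurableSet_Ioi] with ρ (hρ : 0 < ρ)
    rw [norm_mul]
    exact mul_le_mul_of_nonneg_left (hm_bdd _ (mul_pos hlam hρ)) (norm_nonneg _)
  · filter_upwards [ae_restrict_mem measurableSet_Ioi] with ρ (hρ : 0 < ρ)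
    exact (hm.comp (tendsto_id.atTop_mul_const hρ)).const_mul (k ρ)

section Radial

variable {X : Type*} [PseudoMetricSpace X] [MeasurableSpace X]

lemma sigmaFinite_of_measure_ball_ne_top {μ : Measure X} (o : X)
    (h : ∀ r > (0:ℝ), μ (ball o r) ≠ ∞) : SigmaFinite μ :=
  ⟨⟨⟨fun k => ball o (k + 1), fun _ => trivial, fun _ => (h _ (by positivity)).lt_top,
    iUnion_ball_nat_succ o⟩⟩⟩

noncomputable def ballVolumeRatio (μ : Measure X) (o : X) (n : ℕ) (r : ℝ) : ℝ :=
  (μ (ball o r)).toReal / r ^ n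

lemma measurable_ballVolumeRatio (μ : Measure X) (o : X) (n : ℕ) :
    Measurable (ballVolumeRatio μ o n) := by
  have hmono : Monotone fun r => μ (ball o r) := fun _ _ h => measure_mono (ball_subset_ball h)
  unfold ballVolumeRatio
  exact hmono.measurable.ennreal_toReal.div (measurable_id.pow_const n)

lemma norm_ballVolumeRatio_le {μ : Measure X} {o : X} {n : ℕ} {C : ℝ}
    (hC : ∀ r > (0:ℝ), μ (ball o r) ≤ ENNReal.ofReal (C * r ^ n)) {r : ℝ} (hr : 0 < r) :
    ‖ballVolumeRatio μ o n r‖ ≤ max C 0 := by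
  unfold ballVolumeRatio
  rw [Real.norm_of_nonneg (by positivity), div_le_iff₀ (by positivity)]
  refine ENNReal.toReal_le_of_le_ofReal (by positivity) ((hC r hr).trans ?_)
  gcongr
  exact le_max_left C 0

variable [OpensMeasurableSpace X]

lemma lintegral_one_add_dist_div_rpow_rpow_neg (μ : Measure X) [SFinite μ] (o : X)
    {s q lam : ℝ} (hs : 0 < s) (hq : 0 < q) (hlam : 0 < lam) :
    ∫⁻ x, ENNReal.ofReal ((1 + (dist o x / lam) ^ q) ^ (-s)) ∂μ
      = ∫⁻ ρ in Ioi 0, ENNReal.ofReal (radialKernel s q ρ) * μ (ball o (lam * ρ)) := by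
  have hball : ∀ ρ, {x | dist o x / lam < ρ} = ball o (lam * ρ) := fun ρ => by
    ext x; exact (div_lt_iff₀' hlam).trans (by rw [mem_ball, dist_comm])
  calc ∫⁻ x, ENNReal.ofReal ((1 + (dist o x / lam) ^ q) ^ (-s)) ∂μ
      = ∫⁻ x, (∫⁻ ρ in Ioi (dist o x / lam), ENNReal.ofReal (radialKernel s q ρ)) ∂μ := by
        refine lintegral_congr fun x => ?_
        rw [lintegral_Ioi_radialKernel hs hq (by positivity)]
    _ = ∫⁻ ρ, ENNReal.ofReal (radialKernel s q ρ) * μ (ball o (lam * ρ)) := by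
        simp_rw [← hball]
        exact lintegral_setLIntegral_Ioi_eq_lintegral_mul_measure_lt μ
          ((continuous_const.dist continuous_id).measurable.div_const lam)
          (measurable_radialKernel s q).ennreal_ofReal
    _ = ∫⁻ ρ in Ioi 0, ENNReal.ofReal (radialKernel s q ρ) * μ (ball o (lam * ρ)) := by
        rw [← lintegral_indicator measurableSet_Ioi]
        refine lintegral_congr fun ρ => ?_
        by_cases hρ : 0 < ρ
        · rw [indicator_of_mem (mem_Ioi.2 hρ)]
        · rw [indicator_of_notMem (notMem_Ioi.2 (not_lt.1 hρ)), ball_eq_empty.2 (by nlinarith),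
            measure_empty, mul_zero]

lemma integral_eq_setIntegral_mul_ballVolumeRatio (μ : Measure X) [SFinite μ] (o : X)
    {n : ℕ} (hn : 0 < n) {q lam : ℝ} (hq : 0 < q) (hlam : 0 < lam)
    (hfin : ∀ r > (0:ℝ), μ (ball o r) ≠ ∞) :
    ∫ x, lam ^ ((n : ℝ) * (q - 1)) * (lam ^ q + dist o x ^ q) ^ (-(n : ℝ)) ∂μ
      = ∫ ρ in Ioi 0, (n * q * (ρ ^ ((n : ℝ) + q - 1) * (1 + ρ ^ q) ^ (-((n : ℝ) + 1))))
          * ballVolumeRatio μ o n (lam * ρ) := by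
  have hdist : Measurable fun x => dist o x := (continuous_const.dist continuous_id).measurable
  have hratio : Measurable fun ρ => ballVolumeRatio μ o n (lam * ρ) :=
    (measurable_ballVolumeRatio μ o n).comp (measurable_const_mul lam)
  have hkernel : ∀ ρ > (0:ℝ), ENNReal.ofReal (lam ^ (-(n : ℝ)))
      * (ENNReal.ofReal (radialKernel n q ρ) * μ (ball o (lam * ρ)))
      = ENNReal.ofReal ((n * q * (ρ ^ ((n : ℝ) + q - 1) * (1 + ρ ^ q) ^ (-((n : ℝ) + 1))))
          * ballVolumeRatio μ o n (lam * ρ)) := fun ρ hρ => by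
    rw [← ENNReal.ofReal_toReal (hfin _ (mul_pos hlam hρ)),
      ← ENNReal.ofReal_mul (radialKernel_nonneg (by positivity) hq.le hρ.le),
      ← ENNReal.ofReal_mul (by positivity)]
    congr 1
    unfold radialKernel ballVolumeRatio
    rw [Real.rpow_neg hlam.le, Real.rpow_natCast, mul_pow,
      show (n : ℝ) + q - 1 = q - 1 + n by ring, Real.rpow_add hρ, Real.rpow_natCast]
    field_simp
  calc ∫ x, lam ^ ((n : ℝ) * (q - 1)) * (lam ^ q + dist o x ^ q) ^ (-(n : ℝ)) ∂μ
      = ∫ x, lam ^ (-(n : ℝ)) * (1 + (dist o x / lam) ^ q) ^ (-(n : ℝ)) ∂μ := by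
        simp_rw [rpow_mul_rpow_add_rpow_rpow_neg hlam dist_nonneg]
    _ = (∫⁻ x, ENNReal.ofReal (lam ^ (-(n : ℝ)) * (1 + (dist o x / lam) ^ q) ^ (-(n : ℝ)))
          ∂μ).toReal :=
        integral_eq_lintegral_of_nonneg_ae (ae_of_all _ fun _ => by positivity)
          (by fun_prop : Measurable _).aestronglyMeasurable
    _ = (∫⁻ ρ in Ioi 0, ENNReal.ofReal ((n * q * (ρ ^ ((n : ℝ) + q - 1)
          * (1 + ρ ^ q) ^ (-((n : ℝ) + 1)))) * ballVolumeRatio μ o n (lam * ρ))).toReal := by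
        simp_rw [ENNReal.ofReal_mul (Real.rpow_nonneg hlam.le _)]
        rw [lintegral_const_mul' _ _ ENNReal.ofReal_ne_top,
          lintegral_one_add_dist_div_rpow_rpow_neg μ o (Nat.cast_pos.2 hn) hq hlam,
          ← lintegral_const_mul' _ _ ENNReal.ofReal_ne_top]
        exact congrArg _ (setLIntegral_congr_fun measurableSet_Ioi hkernel)
    _ = _ := by
        refine (integral_eq_lintegral_of_nonneg_ae ?_
          (by fun_prop : Measurable _).aestronglyMeasurable).symm
        filter_upwards [ae_restrict_mem measurableSet_Ioi] with ρ (hρ : 0 < ρ)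
        exact mul_nonneg (by positivity) (by unfold ballVolumeRatio; positivity)

end Radial

theorem stmt_4_general {X : Type*} [MetricSpace X] [MeasurableSpace X] [BorelSpace X]
    (μ : Measure X) (o : X) (n : ℕ) (hn : 1 ≤ n) (q : ℝ) (hq : 1 < q)
    (C ν : ℝ)
    (hC : ∀ r > (0:ℝ), μ (Metric.ball o r) ≤ ENNReal.ofReal (C * r ^ n))
    (hν : Tendsto (fun r => (μ (Metric.ball o r)).toReal / r ^ n) atTop (nhds ν)) :
    Tendsto
      (fun lam : ℝ =>
        ∫ x, lam ^ ((n : ℝ) * (q - 1)) * (lam ^ q + dist o x ^ q) ^ (-(n : ℝ)) ∂μ)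
      atTop
      (nhds (ν * ((n : ℝ) * q *
        ∫ ρ in Ioi (0:ℝ), ρ ^ ((n : ℝ) + q - 1) * (1 + ρ ^ q) ^ (-((n : ℝ) + 1))))) := by
  have hfin : ∀ r > (0:ℝ), μ (ball o r) ≠ ∞ := fun r hr =>
    ne_top_of_le_ne_top ENNReal.ofReal_ne_top (hC r hr)
  have : SigmaFinite μ := sigmaFinite_of_measure_ball_ne_top o hfin
  have hlim := tendsto_setIntegral_Ioi_mul_comp_mul_atTop
    ((integrableOn_Ioi_rpow_mul_one_add_rpow_rpow_neg (Nat.cast_pos.2 hn) hq).const_mul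
      ((n : ℝ) * q))
    (measurable_ballVolumeRatio μ o n) (fun r hr => norm_ballVolumeRatio_le hC hr) hν
  rw [integral_const_mul] at hlim
  refine hlim.congr' ?_
  filter_upwards [eventually_gt_atTop 0] with lam hlam
  exact (integral_eq_setIntegral_mul_ballVolumeRatio μ o hn (by linarith) hlam hfin).symm

/-- If `μ (B(o,r)) ≤ C rⁿ` and `μ (B(o,r))/rⁿ → ν`, then
`∫ λ^{n(q-1)} (λ^q + d(o,x)^q)^{-n} dμ → ν · n q ∫₀^∞ ρ^{n+q-1} (1+ρ^q)^{-(n+1)} dρ`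
as `λ → ∞`. -/
theorem stmt_4 {X : Type*} [MetricSpace X] [MeasurableSpace X] [BorelSpace X]
    (μ : Measure X) (o : X) (n : ℕ) (hn : 1 ≤ n) (q : ℝ) (hq : 1 < q)
    (hnq : (n : ℝ) * (q - 1) > q) (C ν : ℝ)
    (hC : ∀ r > (0:ℝ), μ (Metric.ball o r) ≤ ENNReal.ofReal (C * r ^ n))
    (hν : Tendsto (fun r => (μ (Metric.ball o r)).toReal / r ^ n) atTop (nhds ν)) :
    Tendsto
      (fun lam : ℝ =>
        ∫ x, lam ^ ((n : ℝ) * (q - 1)) * (lam ^ q + dist o x ^ q) ^ (-(n : ℝ)) ∂μ)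
      atTop
      (nhds (ν * ((n : ℝ) * q *
        ∫ ρ in Ioi (0:ℝ), ρ ^ ((n : ℝ) + q - 1) * (1 + ρ ^ q) ^ (-((n : ℝ) + 1))))) :=
  stmt_4_general μ o n hn q hq C ν hC hν
end

section
/- Let n ≥ 2 be a natural number and p ∈ (1,n) a real number, with q = p/(p−1). Let (X,d) be a metric space, o ∈ X, and μ a Borel measure on X such that there is a constant C with μ(B(o,r)) ≤ C·rⁿ for all r > 0 and such that lim_{r→∞} μ(B(o,r))/rⁿ = ν. Then lim_{λ→∞} λ^{(q−1)(n−p)} · ∫_X d(o,x)^{q} · (λ^q + d(o,x)^q)^{−n} dμ(x) = ν · n·∫₀^∞ ρ^{n+q−1}·(1+ρ^q)^{−n} dρ. -/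
/-!
Write `g(t) = t^q (1 + t^q)^(-n)`. Then `d^q (λ^q + d^q)^(-n) = λ^(q - qn) g(d/λ)` and, because
`(p - 1) q = p`, `(q - 1)(n - p) + q - qn = -n`. Since `g(t) = ∫_t^∞ (-g')`, Fubini turns
`∫ g(d(o,x)/λ) dμ` into `∫_0^∞ μ(B(o,λs)) (-g'(s)) ds`, so the quantity of interest is
`∫_0^∞ (μ(B(o,λs)) / (λs)^n) s^n (-g'(s)) ds`. The growth bound dominates the integrand by
`C s^n |g'(s)|`, which is integrable because `p < n`, so dominated convergence gives the limit
`ν ∫_0^∞ s^n (-g'(s)) ds`; an integration by parts turns it into `ν n ∫_0^∞ s^(n-1) g(s) ds`.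
-/

open Set Filter MeasureTheory Metric Topology
open scoped ENNReal

noncomputable def radialProfile (q b t : ℝ) : ℝ := t ^ q * (1 + t ^ q) ^ (-b)

noncomputable def radialProfileDeriv (q b s : ℝ) : ℝ :=
  q * s ^ (q - 1) * (1 + s ^ q) ^ (-b - 1) * (1 - (b - 1) * s ^ q)

section RadialProfile

variable {q b : ℝ}

lemma integrableOn_rpow_mul_one_add_rpow_rpow_neg {a : ℝ} (hq : 0 < q) (ha : -1 < a)
    (hab : a - q * b < -1) :
    IntegrableOn (fun s : ℝ => s ^ a * (1 + s ^ q) ^ (-b)) (Ioi 0) := by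
  have hb : 0 ≤ b := by nlinarith
  have hmeas : Measurable fun s : ℝ => s ^ a * (1 + s ^ q) ^ (-b) := by fun_prop
  rw [← Ioc_union_Ioi_eq_Ioi zero_le_one]
  refine IntegrableOn.union ?_ ?_
  · have hint : IntegrableOn (fun s : ℝ => s ^ a) (Ioc 0 1) := by
      simpa [intervalIntegrable_iff_integrableOn_Ioc_of_le zero_le_one] using
        intervalIntegral.intervalIntegrable_rpow' (a := 0) (b := 1) ha
    refine hint.mono' hmeas.aestronglyMeasurable (ae_restrict_of_forall_mem measurableSet_Ioc
      fun s hs => ?_)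
    have hs0 : 0 < s := hs.1
    have hle : (1 + s ^ q) ^ (-b) ≤ 1 :=
      Real.rpow_le_one_of_one_le_of_nonpos (le_add_of_nonneg_right (by positivity)) (by linarith)
    rw [Real.norm_of_nonneg (by positivity)]
    exact mul_le_of_le_one_right (by positivity) hle
  · refine (integrableOn_Ioi_rpow_of_lt hab one_pos).mono' hmeas.aestronglyMeasurable
      (ae_restrict_of_forall_mem measurableSet_Ioi fun s (hs : 1 < s) => ?_)
    have hs0 : 0 < s := one_pos.trans hs
    have hle : (1 + s ^ q) ^ (-b) ≤ (s ^ q) ^ (-b) :=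
      Real.rpow_le_rpow_of_nonpos (by positivity) (by linarith) (by linarith)
    rw [Real.norm_of_nonneg (by positivity), sub_eq_add_neg, Real.rpow_add hs0, ← neg_mul,
      neg_mul_comm, Real.rpow_mul hs0.le]
    gcongr

lemma hasDerivAt_radialProfile {s : ℝ} (hs : 0 < s) :
    HasDerivAt (radialProfile q b) (radialProfileDeriv q b s) s := by
  have hpow : HasDerivAt (fun t : ℝ => t ^ q) (q * s ^ (q - 1)) s :=
    Real.hasDerivAt_rpow_const (Or.inl hs.ne')
  have hbase : 0 < 1 + s ^ q := by positivity
  refine (hpow.mul ((hpow.const_add 1).rpow_const (p := -b) (Or.inl hbase.ne'))).congr_deriv ?_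
  have hsplit : (1 + s ^ q) ^ (-b) = (1 + s ^ q) ^ (-b - 1) * (1 + s ^ q) := by
    rw [← Real.rpow_add_one hbase.ne', sub_add_cancel]
  rw [radialProfileDeriv, hsplit]
  ring

lemma continuousOn_radialProfile (hq : 0 < q) : ContinuousOn (radialProfile q b) (Ici 0) := by
  intro t (ht : 0 ≤ t)
  have hbase : 0 < 1 + t ^ q := by positivity
  unfold radialProfile
  fun_prop (disch := first | exact Or.inr hq.le | exact Or.inl hbase.ne')

lemma abs_radialProfileDeriv_le (hb : 1 ≤ b) {s : ℝ} (hs : 0 < s) :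
    |radialProfileDeriv q b s| ≤ b * |q| * (s ^ (q - 1) * (1 + s ^ q) ^ (-b)) := by
  have hbase : 0 < 1 + s ^ q := by positivity
  have hfactor : |1 - (b - 1) * s ^ q| ≤ b * (1 + s ^ q) := by
    rw [abs_le]; constructor <;> nlinarith [Real.rpow_nonneg hs.le q]
  have hsplit : (1 + s ^ q) ^ (-b) = (1 + s ^ q) ^ (-b - 1) * (1 + s ^ q) := by
    rw [← Real.rpow_add_one hbase.ne', sub_add_cancel]
  rw [radialProfileDeriv, abs_mul, abs_mul, abs_mul, abs_of_pos (Real.rpow_pos_of_pos hs _),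
    abs_of_pos (Real.rpow_pos_of_pos hbase _), hsplit]
  calc |q| * s ^ (q - 1) * (1 + s ^ q) ^ (-b - 1) * |1 - (b - 1) * s ^ q|
      ≤ |q| * s ^ (q - 1) * (1 + s ^ q) ^ (-b - 1) * (b * (1 + s ^ q)) := by gcongr
    _ = _ := by ring

lemma measurable_radialProfileDeriv : Measurable (radialProfileDeriv q b) := by
  unfold radialProfileDeriv; fun_prop

lemma integrableOn_rpow_mul_radialProfileDeriv {a : ℝ} (hq : 0 < q) (ha : 0 ≤ a)
    (hab : a + q < q * b) :
    IntegrableOn (fun s : ℝ => s ^ a * radialProfileDeriv q b s) (Ioi 0) := by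
  have hb : 1 ≤ b := by nlinarith
  have hmeas : Measurable fun s : ℝ => s ^ a * radialProfileDeriv q b s :=
    (measurable_id.pow_const a).mul measurable_radialProfileDeriv
  refine ((integrableOn_rpow_mul_one_add_rpow_rpow_neg hq (a := a + q - 1) (b := b)
    (by linarith) (by linarith)).const_mul (b * |q|)).mono' hmeas.aestronglyMeasurable
    (ae_restrict_of_forall_mem measurableSet_Ioi fun s (hs : 0 < s) => ?_)
  rw [Real.norm_eq_abs, abs_mul, abs_of_pos (Real.rpow_pos_of_pos hs a)]
  calc s ^ a * |radialProfileDeriv q b s|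
      ≤ s ^ a * (b * |q| * (s ^ (q - 1) * (1 + s ^ q) ^ (-b))) := by
        gcongr; exact abs_radialProfileDeriv_le hb hs
    _ = b * |q| * (s ^ (a + q - 1) * (1 + s ^ q) ^ (-b)) := by
        rw [add_sub_assoc, Real.rpow_add hs]; ring

lemma tendsto_rpow_mul_radialProfile_atTop {a : ℝ} (hq : 0 < q) (ha : 0 ≤ a)
    (hab : a + q < q * b) :
    Tendsto (fun t : ℝ => t ^ a * radialProfile q b t) atTop (𝓝 0) := by
  have hb : 0 ≤ b := by nlinarith
  have hdecay : Tendsto (fun t : ℝ => t ^ (a + q - q * b)) atTop (𝓝 0) := by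
    refine (tendsto_rpow_neg_atTop (y := q * b - a - q) (by linarith)).congr fun t => ?_
    ring_nf
  refine squeeze_zero' ?_ ?_ hdecay
  · filter_upwards [eventually_gt_atTop 0] with t ht
    unfold radialProfile; positivity
  · filter_upwards [eventually_gt_atTop 0] with t ht
    have hle : (1 + t ^ q) ^ (-b) ≤ (t ^ q) ^ (-b) :=
      Real.rpow_le_rpow_of_nonpos (by positivity) (by linarith) (by linarith)
    calc t ^ a * radialProfile q b t ≤ t ^ a * (t ^ q * (t ^ q) ^ (-b)) := by
          unfold radialProfile; gcongr
      _ = t ^ (a + q - q * b) := by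
          rw [← Real.rpow_mul ht.le, sub_eq_add_neg, Real.rpow_add ht, Real.rpow_add ht]
          ring_nf

lemma radialProfile_eq_integral_Ioi (hq : 0 < q) (hb : 1 < b) {t : ℝ} (ht : 0 ≤ t) :
    radialProfile q b t = ∫ s in Ioi t, -radialProfileDeriv q b s := by
  have hint : IntegrableOn (radialProfileDeriv q b) (Ioi 0) := by
    simpa using integrableOn_rpow_mul_radialProfileDeriv (a := 0) (b := b) hq le_rfl
      (by nlinarith)
  have hlim : Tendsto (radialProfile q b) atTop (𝓝 0) := by
    simpa using tendsto_rpow_mul_radialProfile_atTop (a := 0) (b := b) hq le_rfl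
      (by nlinarith)
  rw [integral_neg, integral_Ioi_of_hasDerivAt_of_tendsto (a := t)
    (((continuousOn_radialProfile hq).continuousWithinAt ht).mono (Ici_subset_Ici.2 ht))
    (fun s (hs : t < s) => hasDerivAt_radialProfile (ht.trans_lt hs))
    (hint.mono_set (Ioi_subset_Ioi ht)) hlim]
  ring

lemma integral_rpow_mul_neg_radialProfileDeriv {a : ℝ} (hq : 0 < q) (ha : 0 < a)
    (hab : a + q < q * b) :
    ∫ s in Ioi 0, s ^ a * -radialProfileDeriv q b s
      = a * ∫ s in Ioi 0, s ^ (a + q - 1) * (1 + s ^ q) ^ (-b) := by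
  have hprod : ∀ s ∈ Ioi (0 : ℝ),
      a * s ^ (a - 1) * radialProfile q b s = a * (s ^ (a + q - 1) * (1 + s ^ q) ^ (-b)) := by
    intro s (hs : 0 < s)
    rw [radialProfile, show a + q - 1 = a - 1 + q by ring, Real.rpow_add hs]; ring
  have hint : IntegrableOn (fun s : ℝ => a * (s ^ (a + q - 1) * (1 + s ^ q) ^ (-b))) (Ioi 0) :=
    (integrableOn_rpow_mul_one_add_rpow_rpow_neg hq (by linarith) (by linarith)).const_mul a
  have hibp := integral_Ioi_mul_deriv_eq_deriv_mul (a := 0) (a' := 0) (b' := 0)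
    (u := fun s => s ^ a) (v := radialProfile q b)
    (fun s (hs : 0 < s) => Real.hasDerivAt_rpow_const (Or.inl hs.ne'))
    (fun s hs => hasDerivAt_radialProfile hs)
    (integrableOn_rpow_mul_radialProfileDeriv hq ha.le hab)
    (hint.congr_fun (fun s hs => (hprod s hs).symm) measurableSet_Ioi)
    (by simpa [Real.zero_rpow ha.ne'] using
      (((Real.continuous_rpow_const ha.le).continuousWithinAt.mul
        (continuousOn_radialProfile hq 0 self_mem_Ici)).tendsto.mono_left
          (nhdsWithin_mono _ Ioi_subset_Ici_self)))
    (tendsto_rpow_mul_radialProfile_atTop hq ha.le hab)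
  simp only [mul_neg]
  rw [integral_neg, hibp, sub_self, zero_sub, neg_neg, ← integral_const_mul]
  exact setIntegral_congr_fun measurableSet_Ioi hprod

lemma rpow_mul_add_rpow_rpow_neg_eq_radialProfile {lam d : ℝ} (hlam : 0 < lam) (hd : 0 ≤ d) :
    d ^ q * (lam ^ q + d ^ q) ^ (-b) = lam ^ (q - q * b) * radialProfile q b (d / lam) := by
  have hd' : d ^ q = lam ^ q * (d / lam) ^ q := by
    rw [Real.div_rpow hd hlam.le]; field_simp
  rw [radialProfile, hd', show lam ^ q + lam ^ q * (d / lam) ^ q = lam ^ q * (1 + (d / lam) ^ q)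
    by ring, Real.mul_rpow (by positivity) (by positivity), ← Real.rpow_mul hlam.le,
    sub_eq_add_neg, Real.rpow_add hlam, ← mul_neg]
  ring

end RadialProfile

section LayerCake

variable {X : Type*} [MeasurableSpace X] {μ : Measure X}

lemma integral_comp_eq_setIntegral_measureReal_lt_mul {f : X → ℝ} {g h : ℝ → ℝ}
    (hf : Measurable f) (hf0 : ∀ x, 0 ≤ f x) (hfin : ∀ s, μ {x | f x < s} ≠ ∞)
    (hg : ∀ t, 0 ≤ t → g t = ∫ s in Ioi t, h s) (hh : Measurable h)
    (hint : IntegrableOn (fun s => μ.real {x | f x < s} * h s) (Ioi 0)) :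
    ∫ x, g (f x) ∂μ = ∫ s in Ioi 0, μ.real {x | f x < s} * h s := by
  have : SigmaFinite μ :=
    ⟨⟨⟨fun k : ℕ => {x | f x < k}, fun _ => trivial, fun k => (hfin k).lt_top,
      eq_univ_of_forall fun x => mem_iUnion.2 (exists_nat_gt (f x))⟩⟩⟩
  have hsub : ∀ s, MeasurableSet {x | f x < s} := fun s => hf measurableSet_Iio
  set F : X → ℝ → ℝ := fun x s => (Ioi (f x)).indicator h s with hF
  have hsection : ∀ s, (fun x => F x s) = {x | f x < s}.indicator fun _ => h s := by
    intro s; ext x; by_cases hx : f x < s <;> simp [hF, hx]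
  have hFint : Integrable (Function.uncurry F) (μ.prod (volume.restrict (Ioi 0))) := by
    have hmeas : Measurable (Function.uncurry F) :=
      (hh.comp measurable_snd).indicator (measurableSet_lt (hf.comp measurable_fst) measurable_snd)
    refine (integrable_prod_iff' hmeas.aestronglyMeasurable).2
      ⟨Eventually.of_forall fun s => ?_, ?_⟩
    · simp only [Function.uncurry_apply_pair, hsection]
      exact (integrableOn_const (hfin s)).integrable_indicator (hsub s)
    · have hnorm : ∀ s, ∫ x, ‖F x s‖ ∂μ = ‖μ.real {x | f x < s} * h s‖ := by
        intro s
        simp_rw [congrFun (hsection s), norm_indicator_eq_indicator_norm]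
        rw [integral_indicator_const _ (hsub s), smul_eq_mul, norm_mul,
          Real.norm_of_nonneg measureReal_nonneg]
      simpa only [Function.uncurry_apply_pair, hnorm] using hint.norm
  calc ∫ x, g (f x) ∂μ = ∫ x, (∫ s in Ioi (0 : ℝ), F x s) ∂μ := by
        refine integral_congr_ae (Eventually.of_forall fun x => ?_)
        simp only [hF, hg _ (hf0 x), setIntegral_indicator measurableSet_Ioi,
          inter_eq_right.2 (Ioi_subset_Ioi (hf0 x))]
    _ = ∫ s in Ioi (0 : ℝ), ∫ x, F x s ∂μ := integral_integral_swap hFint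
    _ = ∫ s in Ioi 0, μ.real {x | f x < s} * h s := by
        simp only [hsection, integral_indicator_const _ (hsub _), smul_eq_mul]

end LayerCake

lemma tendsto_rpow_neg_mul_setIntegral_comp_mul {m k : ℝ → ℝ} {a C ν : ℝ}
    (hm : Measurable m) (hC : ∀ r > 0, |m r| ≤ C * r ^ a)
    (hν : Tendsto (fun r => m r / r ^ a) atTop (𝓝 ν))
    (hk : IntegrableOn (fun s => s ^ a * k s) (Ioi 0)) :
    Tendsto (fun lam => lam ^ (-a) * ∫ s in Ioi 0, m (lam * s) * k s) atTop
      (𝓝 (ν * ∫ s in Ioi 0, s ^ a * k s)) := by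
  have hrescale : ∀ lam > (0 : ℝ), lam ^ (-a) * ∫ s in Ioi 0, m (lam * s) * k s
      = ∫ s in Ioi 0, m (lam * s) / (lam * s) ^ a * (s ^ a * k s) := by
    intro lam hlam
    rw [← integral_const_mul]
    refine setIntegral_congr_fun measurableSet_Ioi fun s (hs : 0 < s) => ?_
    rw [Real.rpow_neg hlam.le, Real.mul_rpow hlam.le hs.le]
    field_simp
  have hlim : Tendsto (fun lam => ∫ s in Ioi 0, m (lam * s) / (lam * s) ^ a * (s ^ a * k s))
      atTop (𝓝 (∫ s in Ioi 0, ν * (s ^ a * k s))) := by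
    refine tendsto_integral_filter_of_dominated_convergence (fun s => C * ‖s ^ a * k s‖) ?_ ?_
      (hk.norm.const_mul C) ?_
    · refine Eventually.of_forall fun lam => ?_
      exact ((hm.comp (measurable_const_mul lam)).div (by fun_prop)).aestronglyMeasurable.mul
        hk.aestronglyMeasurable
    · filter_upwards [eventually_gt_atTop 0] with lam hlam
      refine ae_restrict_of_forall_mem measurableSet_Ioi fun s (hs : 0 < s) => ?_
      have hr : 0 < lam * s := mul_pos hlam hs
      rw [norm_mul]
      gcongr
      rw [Real.norm_eq_abs, abs_div, abs_of_pos (Real.rpow_pos_of_pos hr a),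
        div_le_iff₀ (by positivity)]
      exact hC _ hr
    · refine ae_restrict_of_forall_mem measurableSet_Ioi fun s (hs : 0 < s) => ?_
      exact (hν.comp (tendsto_id.atTop_mul_const hs)).mul_const _
  rw [← integral_const_mul]
  refine hlim.congr' ?_
  filter_upwards [eventually_gt_atTop 0] with lam hlam using (hrescale lam hlam).symm

section MetricMeasure

variable {X : Type*} [PseudoMetricSpace X] [MeasurableSpace X] [OpensMeasurableSpace X]
  {μ : Measure X} {o : X}

lemma integral_dist_rpow_mul_add_rpow_rpow_neg {q b a C lam : ℝ} (hq : 0 < q) (ha : 0 ≤ a)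
    (hab : a + q < q * b) (hfin : ∀ r, μ (ball o r) ≠ ∞)
    (hC : ∀ r > 0, μ.real (ball o r) ≤ C * r ^ a) (hlam : 0 < lam) :
    ∫ x, dist o x ^ q * (lam ^ q + dist o x ^ q) ^ (-b) ∂μ
      = lam ^ (q - q * b) *
          ∫ s in Ioi 0, μ.real (ball o (lam * s)) * -radialProfileDeriv q b s := by
  have hball : ∀ s, {x | dist o x / lam < s} = ball o (lam * s) := by
    intro s; ext x; simp [div_lt_iff₀ hlam, dist_comm, mul_comm]
  have hmono : Monotone fun r => μ (ball o r) := fun r r' h => measure_mono (ball_subset_ball h)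
  have hint : IntegrableOn (fun s => μ.real (ball o (lam * s)) * -radialProfileDeriv q b s)
      (Ioi 0) := by
    refine ((integrableOn_rpow_mul_radialProfileDeriv hq ha hab).norm.const_mul
      (C * lam ^ a)).mono' ?_ (ae_restrict_of_forall_mem measurableSet_Ioi
        fun s (hs : 0 < s) => ?_)
    · exact ((hmono.measurable.comp (measurable_const_mul lam)).ennreal_toReal.mul
        measurable_radialProfileDeriv.neg).aestronglyMeasurable
    · rw [norm_mul, norm_neg, norm_mul, Real.norm_of_nonneg measureReal_nonneg,
        Real.norm_of_nonneg (Real.rpow_nonneg hs.le a)]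
      calc μ.real (ball o (lam * s)) * ‖radialProfileDeriv q b s‖
          ≤ C * (lam * s) ^ a * ‖radialProfileDeriv q b s‖ := by
            gcongr; exact hC _ (mul_pos hlam hs)
        _ = C * lam ^ a * (s ^ a * ‖radialProfileDeriv q b s‖) := by
            rw [Real.mul_rpow hlam.le hs.le]; ring
  simp_rw [rpow_mul_add_rpow_rpow_neg_eq_radialProfile hlam dist_nonneg]
  rw [integral_const_mul, integral_comp_eq_setIntegral_measureReal_lt_mul
    (f := fun x => dist o x / lam) (by fun_prop) (fun x => by positivity)
    (fun s => by simpa only [hball] using hfin _)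
    (fun t ht => radialProfile_eq_integral_Ioi hq (by nlinarith) ht)
    measurable_radialProfileDeriv.neg (by simpa only [hball] using hint)]
  simp_rw [hball]

end MetricMeasure

theorem stmt_5_general {X : Type*} [MetricSpace X] [MeasurableSpace X] [BorelSpace X]
    (μ : Measure X) (o : X) (n : ℕ) (p q : ℝ)
    (hp : 1 < p) (hpn : p < n) (hq : q = p / (p - 1)) (C ν : ℝ)
    (hC : ∀ r > (0:ℝ), μ (Metric.ball o r) ≤ ENNReal.ofReal (C * r ^ n))
    (hν : Tendsto (fun r => (μ (Metric.ball o r)).toReal / r ^ n) atTop (nhds ν)) :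
    Tendsto
      (fun lam : ℝ =>
        lam ^ ((q - 1) * ((n : ℝ) - p)) *
          ∫ x, dist o x ^ q * (lam ^ q + dist o x ^ q) ^ (-(n : ℝ)) ∂μ)
      atTop
      (nhds (ν * ((n : ℝ) *
        ∫ ρ in Ioi (0:ℝ), ρ ^ ((n : ℝ) + q - 1) * (1 + ρ ^ q) ^ (-(n : ℝ))))) := by
  have hpq : p.HolderConjugate q := (Real.holderConjugate_iff_eq_conjExponent hp).2 hq
  have hq0 : 0 < q := hpq.symm.pos
  have hexp : (q - 1) * ((n : ℝ) - p) + (q - q * n) = -n := by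
    linear_combination -hpq.mul_eq_add
  have hqn : (n : ℝ) + q < q * n := by
    nlinarith [mul_pos (sub_pos.2 hpq.symm.lt) (sub_pos.2 hpn), hpq.mul_eq_add]
  have hfin : ∀ r, μ (ball o r) ≠ ∞ := by
    intro r
    rcases le_or_gt r 0 with hr | hr
    · simp [ball_eq_empty.2 hr]
    · exact ne_top_of_le_ne_top ENNReal.ofReal_ne_top (hC r hr)
  have hgrowth : ∀ r > 0, μ.real (ball o r) ≤ |C| * r ^ (n : ℝ) := fun r hr => by
    rw [Real.rpow_natCast]
    exact ENNReal.toReal_le_of_le_ofReal (by positivity)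
      ((hC r hr).trans (ENNReal.ofReal_le_ofReal (by gcongr; exact le_abs_self C)))
  have hlim := tendsto_rpow_neg_mul_setIntegral_comp_mul (m := fun r => μ.real (ball o r))
    (k := fun s => -radialProfileDeriv q n s)
    (Monotone.measurable fun r r' h => measure_mono (ball_subset_ball h)).ennreal_toReal
    (fun r hr => (abs_of_nonneg measureReal_nonneg).trans_le (hgrowth r hr))
    (by simpa only [Real.rpow_natCast, measureReal_def] using hν)
    (by simpa only [Pi.neg_def, mul_neg] using
      (integrableOn_rpow_mul_radialProfileDeriv hq0 n.cast_nonneg hqn).neg)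
  rw [integral_rpow_mul_neg_radialProfileDeriv hq0 (by linarith) hqn] at hlim
  refine hlim.congr' ?_
  filter_upwards [eventually_gt_atTop 0] with lam hlam
  rw [integral_dist_rpow_mul_add_rpow_rpow_neg hq0 n.cast_nonneg hqn hfin hgrowth hlam,
    ← mul_assoc, ← Real.rpow_add hlam, hexp]

/-- If `μ (B(o,r)) ≤ C rⁿ` and `μ (B(o,r))/rⁿ → ν`, then with `q = p/(p-1)` for `1 < p < n`,
`λ^{(q-1)(n-p)} ∫ d(o,x)^q (λ^q + d(o,x)^q)^{-n} dμ → ν · n ∫₀^∞ ρ^{n+q-1} (1+ρ^q)^{-n} dρ`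
as `λ → ∞`. -/
theorem stmt_5 {X : Type*} [MetricSpace X] [MeasurableSpace X] [BorelSpace X]
    (μ : Measure X) (o : X) (n : ℕ) (hn : 2 ≤ n) (p q : ℝ)
    (hp : 1 < p) (hpn : p < n) (hq : q = p / (p - 1)) (C ν : ℝ)
    (hC : ∀ r > (0:ℝ), μ (Metric.ball o r) ≤ ENNReal.ofReal (C * r ^ n))
    (hν : Tendsto (fun r => (μ (Metric.ball o r)).toReal / r ^ n) atTop (nhds ν)) :
    Tendsto
      (fun lam : ℝ =>
        lam ^ ((q - 1) * ((n : ℝ) - p)) *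
          ∫ x, dist o x ^ q * (lam ^ q + dist o x ^ q) ^ (-(n : ℝ)) ∂μ)
      atTop
      (nhds (ν * ((n : ℝ) *
        ∫ ρ in Ioi (0:ℝ), ρ ^ ((n : ℝ) + q - 1) * (1 + ρ ^ q) ^ (-(n : ℝ))))) :=
  stmt_5_general μ o n p q hp hpn hq C ν hC hν
end

section
/- Let n ≥ 3 be a natural number and let f : ℝⁿ → ℝ be given by f(x) = (1 + ‖x‖²)^{−(n−2)/2}. Then f is continuously differentiable, ‖∇f(x)‖ = (n−2)·‖x‖·(1+‖x‖²)^{−n/2}, and ∫_{ℝⁿ} ‖∇f(x)‖² dx = (n(n−2)/4) · σ_n^{2/n} · ( ∫_{ℝⁿ} (1+‖x‖²)^{−n} dx )^{(n−2)/n}, where σ_n = 2π^{(n+1)/2}/Γ((n+1)/2) is the volume of the unit sphere Sⁿ ⊂ ℝ^{n+1}. -/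
/-!
The gradient is `∇f(x) = -(n-2)(1+‖x‖²)^{-n/2} x`, so `∫ ‖∇f‖² = (n-2)² ∫ ‖x‖²(1+‖x‖²)^{-n}`.
In polar coordinates this integral and `I = ∫ (1+‖x‖²)^{-n}` are Beta integrals
`∫₀^∞ r^{2a-1}(1+r²)^{-(a+b)} dr = Γ(a)Γ(b)/(2Γ(a+b))`, and comparing them gives
`(n-2) ∫ ‖x‖²(1+‖x‖²)^{-n} = n I`. Legendre's duplication formula turns `I = π^{n/2}Γ(n/2)/Γ(n)`
into `σ_n = 2ⁿ I` (inverse stereographic projection `ℝⁿ → Sⁿ` has Jacobian `(2/(1+‖x‖²))ⁿ`), so the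
right-hand side is `(n(n-2)/4) · 4 I^{2/n} · I^{(n-2)/n} = n(n-2) I`.
-/

open Set MeasureTheory Real Module

theorem integral_Ioo_rpow_mul_one_sub_rpow {a b : ℝ} (ha : 0 < a) (hb : 0 < b) :
    ∫ x in Ioo (0 : ℝ) 1, x ^ (a - 1) * (1 - x) ^ (b - 1) = Gamma a * Gamma b / Gamma (a + b) := by
  have hbeta := Complex.betaIntegral_eq_Gamma_mul_div a b (by simpa) (by simpa)
  rw [← Complex.ofReal_add, Complex.Gamma_ofReal, Complex.Gamma_ofReal, Complex.Gamma_ofReal,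
    Complex.betaIntegral, intervalIntegral.integral_of_le zero_le_one,
    integral_Ioc_eq_integral_Ioo] at hbeta
  rw [← Complex.ofReal_inj, ← integral_complex_ofReal]
  push_cast
  rw [← hbeta]
  refine setIntegral_congr_fun measurableSet_Ioo fun x hx => ?_
  rw [Complex.ofReal_cpow hx.1.le, Complex.ofReal_cpow (sub_pos.2 hx.2).le]
  push_cast
  ring

theorem integral_Ioi_eq_integral_Ioo_div_one_sub {E : Type*} [NormedAddCommGroup E]
    [NormedSpace ℝ E] (g : ℝ → E) :
    ∫ r in Ioi (0 : ℝ), g r = ∫ u in Ioo (0 : ℝ) 1, ((1 - u) ^ 2)⁻¹ • g (u / (1 - u)) := by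
  have himage : (fun u => u / (1 - u)) '' Ioo (0 : ℝ) 1 = Ioi 0 := by
    ext r
    refine ⟨?_, fun (hr : 0 < r) => ⟨r / (1 + r), ⟨by positivity, ?_⟩, ?_⟩⟩
    · rintro ⟨u, hu, rfl⟩
      exact div_pos hu.1 (sub_pos.2 hu.2)
    · rw [div_lt_one (by positivity)]; linarith
    · have : (1 : ℝ) + r ≠ 0 := by positivity
      field_simp
      ring
  have hderiv : ∀ u ∈ Ioo (0 : ℝ) 1,
      HasDerivWithinAt (fun u => u / (1 - u)) ((1 - u) ^ 2)⁻¹ (Ioo 0 1) u := by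
    intro u hu
    have h : (1 : ℝ) - u ≠ 0 := (sub_pos.2 hu.2).ne'
    refine (((hasDerivAt_id' u).div ((hasDerivAt_id' u).const_sub 1) h).congr_deriv ?_
      ).hasDerivWithinAt
    field_simp
    ring
  have hinj : InjOn (fun u => u / (1 - u)) (Ioo (0 : ℝ) 1) := by
    intro u hu v hv huv
    have hu' : (1 : ℝ) - u ≠ 0 := (sub_pos.2 hu.2).ne'
    have hv' : (1 : ℝ) - v ≠ 0 := (sub_pos.2 hv.2).ne'
    field_simp at huv
    linarith
  rw [← himage, integral_image_eq_integral_abs_deriv_smul measurableSet_Ioo hderiv hinj]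
  refine setIntegral_congr_fun measurableSet_Ioo fun u _ => ?_
  rw [abs_of_nonneg (by positivity)]

theorem integral_Ioi_rpow_mul_one_add_rpow {a b : ℝ} (ha : 0 < a) (hb : 0 < b) :
    ∫ r in Ioi (0 : ℝ), r ^ (a - 1) * (1 + r) ^ (-(a + b)) = Gamma a * Gamma b / Gamma (a + b) := by
  rw [integral_Ioi_eq_integral_Ioo_div_one_sub, ← integral_Ioo_rpow_mul_one_sub_rpow ha hb]
  refine setIntegral_congr_fun measurableSet_Ioo fun u ⟨hu, hu1⟩ => ?_
  have hw : 0 < 1 - u := sub_pos.2 hu1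
  have hsum : 1 + u / (1 - u) = (1 - u)⁻¹ := by field_simp; ring
  rw [hsum, div_rpow hu.le hw.le, inv_rpow hw.le, ← rpow_neg hw.le, neg_neg, smul_eq_mul,
    ← rpow_two, ← rpow_neg hw.le, div_eq_mul_inv, ← rpow_neg hw.le]
  calc (1 - u) ^ (-2 : ℝ) * (u ^ (a - 1) * (1 - u) ^ (-(a - 1)) * (1 - u) ^ (a + b))
      = u ^ (a - 1) * ((1 - u) ^ (-2 : ℝ) * (1 - u) ^ (-(a - 1)) * (1 - u) ^ (a + b)) := by ring
    _ = u ^ (a - 1) * (1 - u) ^ (b - 1) := by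
      rw [← rpow_add hw, ← rpow_add hw]
      ring_nf

theorem integral_Ioi_rpow_mul_one_add_sq_rpow {a b : ℝ} (ha : 0 < a) (hb : 0 < b) :
    ∫ x in Ioi (0 : ℝ), x ^ (2 * a - 1) * (1 + x ^ 2) ^ (-(a + b))
      = Gamma a * Gamma b / (2 * Gamma (a + b)) := by
  have hsubst := integral_comp_rpow_Ioi (fun y => y ^ (a - 1) * (1 + y) ^ (-(a + b))) two_ne_zero
  rw [integral_Ioi_rpow_mul_one_add_rpow ha hb] at hsubst
  rw [div_mul_eq_div_div_swap, ← hsubst, eq_div_iff two_ne_zero, ← integral_mul_const]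
  refine setIntegral_congr_fun measurableSet_Ioi fun x (hx : 0 < x) => ?_
  rw [rpow_two, smul_eq_mul, abs_two, ← rpow_natCast, ← rpow_mul hx.le,
    show 2 * a - 1 = 1 + 2 * (a - 1) by ring, rpow_add hx, rpow_one]
  norm_num
  ring

theorem two_mul_pi_rpow_div_Gamma_eq {s : ℝ} (hs : 0 < s) :
    2 * π ^ ((s + 1) / 2) / Gamma ((s + 1) / 2) =
      2 ^ s * (π ^ (s / 2) * Gamma (s / 2) / Gamma s) := by
  have hdup := Gamma_mul_Gamma_add_half (s / 2)
  rw [mul_div_cancel₀ s two_ne_zero, ← add_div] at hdup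
  have hpi : π ^ ((s + 1) / 2) = π ^ (s / 2) * √π := by
    rw [sqrt_eq_rpow, ← rpow_add pi_pos, add_div]
  have h2pow : (2 : ℝ) ^ s * 2 ^ (1 - s) = 2 := by
    rw [← rpow_add two_pos, add_sub_cancel, rpow_one]
  rw [hpi]
  field_simp
  linear_combination (-2 ^ s) * hdup - √π * Gamma s * h2pow

section Gradient

variable {F : Type*} [NormedAddCommGroup F] [InnerProductSpace ℝ F]

theorem contDiff_one_add_norm_sq_rpow (p : ℝ) {k : WithTop ℕ∞} :
    ContDiff ℝ k fun x : F => (1 + ‖x‖ ^ 2) ^ p :=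
  (contDiff_const.add (contDiff_norm_sq ℝ)).rpow_const_of_ne fun _ => by positivity

theorem hasGradientAt_one_add_norm_sq_rpow [CompleteSpace F] (p : ℝ) (x : F) :
    HasGradientAt (fun x : F => (1 + ‖x‖ ^ 2) ^ p) ((2 * p * (1 + ‖x‖ ^ 2) ^ (p - 1)) • x) x := by
  have hderiv := ((hasStrictFDerivAt_norm_sq x).hasFDerivAt.const_add 1).rpow_const
    (p := p) (Or.inl (by positivity))
  have hdual : InnerProductSpace.toDual ℝ F ((2 * p * (1 + ‖x‖ ^ 2) ^ (p - 1)) • x) =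
      (p * (1 + ‖x‖ ^ 2) ^ (p - 1)) • 2 • innerSL ℝ x := by
    ext y
    simp only [map_smul, smul_apply, InnerProductSpace.toDual_apply_apply,
      smul_eq_mul, coe_innerSL_apply, nsmul_eq_mul, Nat.cast_ofNat]
    ring
  rwa [hasGradientAt_iff_hasFDerivAt, hdual]

theorem norm_gradient_one_add_norm_sq_rpow [CompleteSpace F] (p : ℝ) (x : F) :
    ‖gradient (fun x : F => (1 + ‖x‖ ^ 2) ^ p) x‖ = 2 * |p| * ‖x‖ * (1 + ‖x‖ ^ 2) ^ (p - 1) := by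
  rw [(hasGradientAt_one_add_norm_sq_rpow p x).gradient, norm_smul, norm_mul, norm_mul,
    norm_two, Real.norm_eq_abs, Real.norm_of_nonneg (by positivity)]
  ring

end Gradient

section Radial

variable {E : Type*} [NormedAddCommGroup E] [InnerProductSpace ℝ E] [FiniteDimensional ℝ E]
  [MeasurableSpace E] [BorelSpace E] [Nontrivial E]

theorem integral_fun_norm_eq_mul_integral_Ioi (g : ℝ → ℝ) :
    ∫ x : E, g ‖x‖ = 2 * π ^ ((finrank ℝ E : ℝ) / 2) / Gamma (finrank ℝ E / 2) *
      ∫ y in Ioi (0 : ℝ), y ^ (finrank ℝ E - 1) * g y := by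
  have hd : (0 : ℝ) < finrank ℝ E := by exact_mod_cast finrank_pos
  rw [integral_fun_norm_addHaar, measureReal_def, InnerProductSpace.volume_ball,
    ENNReal.ofReal_one, one_pow, one_mul, ENNReal.toReal_ofReal (by positivity),
    Gamma_add_one (by positivity), sqrt_eq_rpow, ← rpow_natCast, ← rpow_mul pi_pos.le]
  simp only [nsmul_eq_mul, smul_eq_mul]
  field_simp

theorem integral_norm_pow_mul_one_add_norm_sq_rpow (k : ℕ) {s : ℝ}
    (hs : (finrank ℝ E : ℝ) / 2 + k < s) :
    ∫ x : E, ‖x‖ ^ (2 * k) * (1 + ‖x‖ ^ 2) ^ (-s) =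
      π ^ ((finrank ℝ E : ℝ) / 2) * Gamma (finrank ℝ E / 2 + k) *
        Gamma (s - (finrank ℝ E / 2 + k)) / (Gamma (finrank ℝ E / 2) * Gamma s) := by
  rw [integral_fun_norm_eq_mul_integral_Ioi (fun r => r ^ (2 * k) * (1 + r ^ 2) ^ (-s))]
  set d := finrank ℝ E
  have hd : 1 ≤ d := finrank_pos
  have hd' : (0 : ℝ) < d := by exact_mod_cast hd
  have ha : 0 < (d : ℝ) / 2 + k := by positivity
  have hradial := integral_Ioi_rpow_mul_one_add_sq_rpow ha (sub_pos.2 hs)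
  rw [add_sub_cancel] at hradial
  have hintegrand : EqOn (fun y : ℝ => y ^ (d - 1) * (y ^ (2 * k) * (1 + y ^ 2) ^ (-s)))
      (fun y => y ^ (2 * ((d : ℝ) / 2 + k) - 1) * (1 + y ^ 2) ^ (-s)) (Ioi 0) := by
    intro y _
    dsimp only
    rw [← mul_assoc, ← pow_add, ← rpow_natCast]
    congr 2
    push_cast [hd]
    ring
  rw [setIntegral_congr_fun measurableSet_Ioi hintegrand, hradial]
  have := (Gamma_pos_of_pos (half_pos hd')).ne'
  have := (Gamma_pos_of_pos (ha.trans hs)).ne'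
  field_simp

theorem integral_one_add_norm_sq_rpow_neg_finrank :
    ∫ x : E, (1 + ‖x‖ ^ 2) ^ (-(finrank ℝ E : ℝ)) =
      π ^ ((finrank ℝ E : ℝ) / 2) * Gamma (finrank ℝ E / 2) / Gamma (finrank ℝ E) := by
  have hd : (0 : ℝ) < finrank ℝ E := by exact_mod_cast finrank_pos
  have h := integral_norm_pow_mul_one_add_norm_sq_rpow (E := E) 0 (s := finrank ℝ E)
    (by simpa using hd)
  simp only [mul_zero, pow_zero, one_mul, CharP.cast_eq_zero, add_zero, sub_half] at h
  rw [h]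
  have := (Gamma_pos_of_pos (half_pos hd)).ne'
  field_simp

theorem integral_norm_sq_mul_one_add_norm_sq_rpow_neg_finrank (hE : 2 < finrank ℝ E) :
    ((finrank ℝ E : ℝ) - 2) * ∫ x : E, ‖x‖ ^ 2 * (1 + ‖x‖ ^ 2) ^ (-(finrank ℝ E : ℝ)) =
      finrank ℝ E * ∫ x : E, (1 + ‖x‖ ^ 2) ^ (-(finrank ℝ E : ℝ)) := by
  have hd : (2 : ℝ) < finrank ℝ E := by exact_mod_cast hE
  have h := integral_norm_pow_mul_one_add_norm_sq_rpow (E := E) 1 (s := finrank ℝ E)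
    (by linarith)
  rw [mul_one, Nat.cast_one] at h
  rw [h, integral_one_add_norm_sq_rpow_neg_finrank]
  set d : ℝ := (finrank ℝ E : ℝ)
  have hsub : d - (d / 2 + 1) = d / 2 - 1 := by ring
  have hΓ : Gamma (d / 2) = (d / 2 - 1) * Gamma (d / 2 - 1) := by
    rw [← Gamma_add_one (by linarith), sub_add_cancel]
  rw [hsub, Gamma_add_one (by positivity), hΓ]
  have := (Gamma_pos_of_pos (show 0 < d / 2 - 1 by linarith)).ne'
  have := (Gamma_pos_of_pos (show 0 < d by linarith)).ne'
  field_simp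

theorem two_mul_pi_rpow_div_Gamma_eq_two_pow_mul_integral :
    2 * π ^ (((finrank ℝ E : ℝ) + 1) / 2) / Gamma (((finrank ℝ E : ℝ) + 1) / 2) =
      2 ^ (finrank ℝ E : ℝ) * ∫ x : E, (1 + ‖x‖ ^ 2) ^ (-(finrank ℝ E : ℝ)) := by
  rw [integral_one_add_norm_sq_rpow_neg_finrank, two_mul_pi_rpow_div_Gamma_eq]
  exact_mod_cast finrank_pos

theorem integral_norm_gradient_sq_one_add_norm_sq_rpow (hE : 2 < finrank ℝ E) :
    ∫ x : E, ‖gradient (fun x : E => (1 + ‖x‖ ^ 2) ^ (-(((finrank ℝ E : ℝ) - 2) / 2))) x‖ ^ 2 =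
      finrank ℝ E * ((finrank ℝ E : ℝ) - 2) * ∫ x : E, (1 + ‖x‖ ^ 2) ^ (-(finrank ℝ E : ℝ)) := by
  have hd : (2 : ℝ) < finrank ℝ E := by exact_mod_cast hE
  set d : ℝ := (finrank ℝ E : ℝ)
  have hsq (x : E) :
      ‖gradient (fun x : E => (1 + ‖x‖ ^ 2) ^ (-((d - 2) / 2))) x‖ ^ 2 =
        (d - 2) ^ 2 * (‖x‖ ^ 2 * (1 + ‖x‖ ^ 2) ^ (-d)) := by
    rw [norm_gradient_one_add_norm_sq_rpow, abs_of_nonpos (by linarith), mul_pow, mul_pow,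
      ← rpow_mul_natCast (by positivity)]
    ring_nf
  simp_rw [hsq]
  rw [integral_const_mul, pow_two, mul_assoc,
    integral_norm_sq_mul_one_add_norm_sq_rpow_neg_finrank hE]
  ring

end Radial

theorem two_rpow_mul_rpow_two_div_mul_rpow_sub_two_div {I s : ℝ} (hI : 0 ≤ I) (hs : s ≠ 0) :
    (2 ^ s * I) ^ (2 / s) * I ^ ((s - 2) / s) = 4 * I := by
  have hexp₁ : s * (2 / s) = 2 := by field_simp
  have hexp₂ : 2 / s + (s - 2) / s = 1 := by field_simp; ring
  rw [mul_rpow (by positivity) hI, ← rpow_mul zero_le_two, hexp₁, mul_assoc,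
    ← rpow_add' hI (by rw [hexp₂]; exact one_ne_zero), hexp₂, rpow_one]
  norm_num

/-- The function `f(x) = (1+‖x‖²)^{-(n-2)/2}` on `ℝⁿ` is `C¹`, its gradient has norm
`(n-2)‖x‖(1+‖x‖²)^{-n/2}`, and it realizes equality in the sharp Sobolev inequality:
`∫ ‖∇f‖² = (n(n-2)/4) σ_n^{2/n} (∫ (1+‖x‖²)^{-n})^{(n-2)/n}`. -/
theorem stmt_10 (n : ℕ) (hn : 3 ≤ n)
    (f : EuclideanSpace ℝ (Fin n) → ℝ)
    (hf : ∀ x, f x = (1 + ‖x‖ ^ 2) ^ (-(((n : ℝ) - 2) / 2))) :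
    ContDiff ℝ 1 f ∧
    (∀ x, ‖gradient f x‖ = ((n : ℝ) - 2) * ‖x‖ * (1 + ‖x‖ ^ 2) ^ (-(n : ℝ) / 2)) ∧
    ∫ x, ‖gradient f x‖ ^ 2
      = ((n : ℝ) * ((n : ℝ) - 2) / 4) *
          (2 * Real.pi ^ (((n : ℝ) + 1) / 2) / Real.Gamma (((n : ℝ) + 1) / 2)) ^ ((2 : ℝ) / n) *
          (∫ x : EuclideanSpace ℝ (Fin n), (1 + ‖x‖ ^ 2) ^ (-(n : ℝ))) ^ (((n : ℝ) - 2) / n) := by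
  obtain rfl : f = fun x => (1 + ‖x‖ ^ 2) ^ (-(((n : ℝ) - 2) / 2)) := funext hf
  have hn' : (3 : ℝ) ≤ n := by exact_mod_cast hn
  have hfinrank : finrank ℝ (EuclideanSpace ℝ (Fin n)) = n := finrank_euclideanSpace_fin
  have : Nontrivial (EuclideanSpace ℝ (Fin n)) := by
    rw [← finrank_pos_iff (R := ℝ), hfinrank]; omega
  refine ⟨contDiff_one_add_norm_sq_rpow _, fun x => ?_, ?_⟩
  · rw [norm_gradient_one_add_norm_sq_rpow, abs_of_nonpos (by linarith),
      show -(((n : ℝ) - 2) / 2) - 1 = -(n : ℝ) / 2 by ring]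
    ring
  have henergy := integral_norm_gradient_sq_one_add_norm_sq_rpow
    (E := EuclideanSpace ℝ (Fin n)) (by omega)
  have hσ := two_mul_pi_rpow_div_Gamma_eq_two_pow_mul_integral (E := EuclideanSpace ℝ (Fin n))
  rw [hfinrank] at henergy hσ
  rw [henergy, hσ, mul_assoc _ (_ ^ _),
    two_rpow_mul_rpow_two_div_mul_rpow_sub_two_div (integral_nonneg fun x => by positivity)
      (by positivity)]
  ring
end

section
/- Let n ≥ 2 be a natural number, p ∈ (1,n) a real number, q = p/(p−1), and let f : ℝⁿ → ℝ be given by f(x) = (1 + ‖x‖^q)^{−(n−p)/p}. Then f is differentiable on ℝⁿ, ‖∇f(x)‖ = q·((n−p)/p)·‖x‖^{q−1}·(1+‖x‖^q)^{−n/p}, and ∫_{ℝⁿ} ‖∇f(x)‖^p dx = q^p·((n−p)/p)^p · n·ω_n · ∫₀^∞ ρ^{n+q−1}·(1+ρ^q)^{−n} dρ, where ω_n = π^{n/2}/Γ(n/2+1) is the volume of the unit ball of ℝⁿ. -/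
/-!
The chain rule applied to `x ↦ ‖x‖ ^ q` (which is `C¹` because `q > 1`) shows that the gradient
of `f` is a scalar multiple of `x`, which gives its norm. The integrand `‖∇f‖ ^ p` is then radial,
and polar coordinates, `∫ g ‖x‖ dx = n ω_n ∫₀^∞ r ^ (n - 1) g r dr`, reduce the integral to one
variable, where `(q - 1) p = q` for conjugate exponents turns `r ^ ((q - 1) p)` into `r ^ q`.
-/

open Set MeasureTheory

section

variable {E : Type*} [NormedAddCommGroup E] [InnerProductSpace ℝ E] [CompleteSpace E]
  {q : ℝ}

theorem hasGradientAt_one_add_norm_rpow_rpow (hq : 1 < q) (a : ℝ) (x : E) :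
    HasGradientAt (fun x : E ↦ (1 + ‖x‖ ^ q) ^ a)
      ((a * (1 + ‖x‖ ^ q) ^ (a - 1) * (q * ‖x‖ ^ (q - 2))) • x) x := by
  have hbase : 1 + ‖x‖ ^ q ≠ 0 := by positivity
  rw [hasGradientAt_iff_hasFDerivAt, map_smul, ← smul_smul]
  exact ((hasFDerivAt_norm_rpow x hq).const_add 1).rpow_const (Or.inl hbase)

theorem norm_gradient_one_add_norm_rpow_rpow (hq : 1 < q) (a : ℝ) (x : E) :
    ‖gradient (fun x : E ↦ (1 + ‖x‖ ^ q) ^ a) x‖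
      = |a| * q * ‖x‖ ^ (q - 1) * (1 + ‖x‖ ^ q) ^ (a - 1) := by
  have hx : ‖x‖ ^ (q - 1) = ‖x‖ ^ (q - 2) * ‖x‖ := by
    rw [← Real.rpow_add_one' (norm_nonneg x) (by linarith)]
    ring_nf
  rw [(hasGradientAt_one_add_norm_rpow_rpow hq a x).gradient, norm_smul, Real.norm_eq_abs,
    abs_mul, abs_mul, abs_of_pos (by positivity : 0 < (1 + ‖x‖ ^ q) ^ (a - 1)),
    abs_of_nonneg (by positivity : 0 ≤ q * ‖x‖ ^ (q - 2)), hx]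
  ring

end

theorem integral_fun_norm_euclideanSpace {F : Type*} [NormedAddCommGroup F] [NormedSpace ℝ F]
    {n : ℕ} (hn : n ≠ 0) (g : ℝ → F) :
    ∫ x : EuclideanSpace ℝ (Fin n), g ‖x‖
      = (n * (Real.pi ^ ((n : ℝ) / 2) / Real.Gamma ((n : ℝ) / 2 + 1))) •
          ∫ r in Ioi (0 : ℝ), r ^ ((n : ℝ) - 1) • g r := by
  have := NeZero.mk hn
  have hball : volume.real (Metric.ball (0 : EuclideanSpace ℝ (Fin n)) 1)
      = Real.pi ^ ((n : ℝ) / 2) / Real.Gamma ((n : ℝ) / 2 + 1) := by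
    rw [measureReal_def, EuclideanSpace.volume_ball, Fintype.card_fin, ENNReal.ofReal_one, one_pow,
      one_mul, ENNReal.toReal_ofReal (by positivity), Real.sqrt_eq_rpow, ← Real.rpow_natCast,
      ← Real.rpow_mul Real.pi_nonneg, one_div_mul_eq_div]
  rw [integral_fun_norm_addHaar, finrank_euclideanSpace_fin, hball, ← Nat.cast_smul_eq_nsmul ℝ,
    smul_smul]
  congr 1
  refine setIntegral_congr_fun measurableSet_Ioi fun r _ ↦ ?_
  rw [← Real.rpow_natCast, Nat.cast_sub (Nat.one_le_iff_ne_zero.mpr hn), Nat.cast_one]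

theorem Real.HolderConjugate.mul_rpow_sub_one_mul_one_add_rpow_rpow {p q : ℝ}
    (hpq : q.HolderConjugate p) {A r : ℝ} (hA : 0 ≤ A) (hr : 0 ≤ r) (b : ℝ) :
    (A * r ^ (q - 1) * (1 + r ^ q) ^ (-b / p)) ^ p = A ^ p * r ^ q * (1 + r ^ q) ^ (-b) := by
  have hp : p ≠ 0 := hpq.symm.ne_zero
  rw [Real.mul_rpow (by positivity) (by positivity), Real.mul_rpow hA (by positivity),
    ← Real.rpow_mul hr, hpq.sub_one_mul_conj, ← Real.rpow_mul (by positivity), div_mul_cancel₀ _ hp]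

theorem stmt_11_general (n : ℕ) (p q : ℝ) (hp : 1 < p) (hpn : p < n)
    (hq : q = p / (p - 1))
    (f : EuclideanSpace ℝ (Fin n) → ℝ)
    (hf : ∀ x, f x = (1 + ‖x‖ ^ q) ^ (-(((n : ℝ) - p) / p))) :
    Differentiable ℝ f ∧
    (∀ x, ‖gradient f x‖
        = q * (((n : ℝ) - p) / p) * ‖x‖ ^ (q - 1) * (1 + ‖x‖ ^ q) ^ (-(n : ℝ) / p)) ∧
    ∫ x, ‖gradient f x‖ ^ p
      = q ^ p * (((n : ℝ) - p) / p) ^ p * (n : ℝ) *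
          (Real.pi ^ ((n : ℝ) / 2) / Real.Gamma ((n : ℝ) / 2 + 1)) *
          ∫ ρ in Ioi (0:ℝ), ρ ^ ((n : ℝ) + q - 1) * (1 + ρ ^ q) ^ (-(n : ℝ)) := by
  have hpq : q.HolderConjugate p := hq ▸ (Real.HolderConjugate.conjExponent hp).symm
  have hc : 0 < ((n : ℝ) - p) / p := div_pos (by linarith) (by linarith)
  have hn : n ≠ 0 := by rintro rfl; norm_num at hpn; linarith
  have hfun : f = fun x ↦ (1 + ‖x‖ ^ q) ^ (-(((n : ℝ) - p) / p)) := funext hf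
  have hgrad (x : EuclideanSpace ℝ (Fin n)) : ‖gradient f x‖
      = q * (((n : ℝ) - p) / p) * ‖x‖ ^ (q - 1) * (1 + ‖x‖ ^ q) ^ (-(n : ℝ) / p) := by
    rw [hfun, norm_gradient_one_add_norm_rpow_rpow hpq.lt, abs_neg, abs_of_pos hc,
      show -(((n : ℝ) - p) / p) - 1 = -(n : ℝ) / p by field_simp; ring]
    ring
  refine ⟨hfun ▸ fun x ↦
    (hasGradientAt_one_add_norm_rpow_rpow hpq.lt _ x).hasFDerivAt.differentiableAt, hgrad, ?_⟩
  simp only [hgrad]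
  rw [integral_fun_norm_euclideanSpace hn (fun r ↦ (q * (((n : ℝ) - p) / p) * r ^ (q - 1) *
    (1 + r ^ q) ^ (-(n : ℝ) / p)) ^ p), smul_eq_mul, ← integral_const_mul, ← integral_const_mul]
  refine setIntegral_congr_fun measurableSet_Ioi fun r (hr : 0 < r) ↦ ?_
  rw [smul_eq_mul, hpq.mul_rpow_sub_one_mul_one_add_rpow_rpow (mul_nonneg hpq.nonneg hc.le) hr.le,
    Real.mul_rpow hpq.nonneg hc.le, add_sub_right_comm, Real.rpow_add hr]
  ring

/-- The extremal function `f(x) = (1+‖x‖^q)^{-(n-p)/p}` of the `L^p` Sobolev inequality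
is differentiable, `‖∇f(x)‖ = q((n-p)/p)‖x‖^{q-1}(1+‖x‖^q)^{-n/p}`, and
`∫ ‖∇f‖^p = q^p ((n-p)/p)^p n ω_n ∫₀^∞ ρ^{n+q-1}(1+ρ^q)^{-n} dρ`, where
`ω_n = π^{n/2}/Γ(n/2+1)`. -/
theorem stmt_11 (n : ℕ) (hn : 2 ≤ n) (p q : ℝ) (hp : 1 < p) (hpn : p < n)
    (hq : q = p / (p - 1))
    (f : EuclideanSpace ℝ (Fin n) → ℝ)
    (hf : ∀ x, f x = (1 + ‖x‖ ^ q) ^ (-(((n : ℝ) - p) / p))) :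
    Differentiable ℝ f ∧
    (∀ x, ‖gradient f x‖
        = q * (((n : ℝ) - p) / p) * ‖x‖ ^ (q - 1) * (1 + ‖x‖ ^ q) ^ (-(n : ℝ) / p)) ∧
    ∫ x, ‖gradient f x‖ ^ p
      = q ^ p * (((n : ℝ) - p) / p) ^ p * (n : ℝ) *
          (Real.pi ^ ((n : ℝ) / 2) / Real.Gamma ((n : ℝ) / 2 + 1)) *
          ∫ ρ in Ioi (0:ℝ), ρ ^ ((n : ℝ) + q - 1) * (1 + ρ ^ q) ^ (-(n : ℝ)) :=
  stmt_11_general n p q hp hpn hq f hf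
end

section
/- Let n ≥ 3 be a natural number, (X,d) a metric space, o ∈ X, μ a Borel measure on X, and S : X → [0,∞) a measurable function such that the function Σ(r) := r^{2−n} ∫_{B(o,r)} S dμ is bounded on (0,∞). Then limsup_{λ→∞} ∫_X λ^{n−2}·(λ² + d(o,x)²)^{−(n−2)}·S(x) dμ(x) ≤ 2(n−2)·( ∫₀^∞ ρ^{n−1}·(1+ρ²)^{−(n−1)} dρ ) · limsup_{r→∞} Σ(r). -/
/-
Write `ν = S μ` and `A(r) = ν(B(o,r)) = r^{n-2} Σ(r)`. Since `f_λ(t)² → 0` as `t → ∞`, Tonelli's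
theorem (layer cake) turns `∫ f_λ(d(o,x))² dν` into `∫₀^∞ (-∂ᵣ f_λ(r)²) A(r) dr`, and the
substitution `r = λρ` rewrites this as `∫₀^∞ 2(n-2) ρ^{n-1}(1+ρ²)^{-(n-1)} Σ(λρ) dρ`. As `Σ` is
bounded, dominated convergence applies to the tail suprema `sup_{t ≥ λρ} Σ(t)`, which dominate
`Σ(λρ)` and decrease to `limsup Σ`.
-/

open Set Filter MeasureTheory Metric Topology
open scoped ENNReal

theorem tendsto_ciSup_Ici_limsup {β : Type*} [SemilatticeSup β] [Nonempty β] {f : β → ℝ}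
    (hf_above : BddAbove (range f)) (hf_below : BddBelow (range f)) :
    Tendsto (fun s : β => ⨆ t : Ici s, f t) atTop (𝓝 (limsup f atTop)) := by
  obtain ⟨a, ha⟩ := hf_below
  obtain ⟨b, hb⟩ := id hf_above
  refine tendsto_order.2 ⟨fun c hc => ?_, fun c hc => ?_⟩
  · have hfreq := frequently_atTop.1 (frequently_lt_of_lt_limsup
      (isCoboundedUnder_le_of_le atTop fun t => ha (mem_range_self t)) hc)
    refine Eventually.of_forall fun s => ?_
    obtain ⟨t, hst, hct⟩ := hfreq s
    exact hct.trans_le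
      (le_ciSup (hf_above.range_comp_right (Subtype.val : Ici s → β)) (⟨t, hst⟩ : Ici s))
  · obtain ⟨c', hlt, hc'⟩ := exists_between hc
    obtain ⟨R, hR⟩ := eventually_atTop.1 (eventually_lt_of_limsup_lt hlt
      (isBoundedUnder_of ⟨b, fun t => hb (mem_range_self t)⟩))
    filter_upwards [eventually_ge_atTop R] with s hs
    exact (ciSup_le fun t : Ici s => (hR t (hs.trans t.2)).le).trans_lt hc'

theorem limsup_integral_mul_comp_mul_le {μ : Measure ℝ} {k σ : ℝ → ℝ} {M : ℝ}
    (hk : Integrable k μ) (hk_nonneg : 0 ≤ᵐ[μ] k) (hpos : ∀ᵐ ρ ∂μ, 0 < ρ)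
    (hσ_nonneg : ∀ r, 0 ≤ σ r) (hσ_le : ∀ r, σ r ≤ M) :
    limsup (fun lam => ∫ ρ, k ρ * σ (lam * ρ) ∂μ) atTop ≤ (∫ ρ, k ρ ∂μ) * limsup σ atTop := by
  set T : ℝ → ℝ := fun s => ⨆ t : Ici s, σ t
  have hσ_above : BddAbove (range σ) := ⟨M, forall_mem_range.2 hσ_le⟩
  have hσT : ∀ s, σ s ≤ T s := fun s =>
    le_ciSup (hσ_above.range_comp_right (Subtype.val : Ici s → ℝ)) (⟨s, self_mem_Ici⟩ : Ici s)
  have hT_anti : Antitone T := fun s s' h => ciSup_le fun t =>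
    le_ciSup (hσ_above.range_comp_right (Subtype.val : Ici s → ℝ)) (⟨t, h.trans t.2⟩ : Ici s)
  have hT_norm : ∀ s, ‖T s‖ ≤ M := fun s => by
    rw [Real.norm_of_nonneg ((hσ_nonneg s).trans (hσT s))]
    exact ciSup_le fun t => hσ_le t
  have hT_meas : ∀ lam, AEStronglyMeasurable (fun ρ => T (lam * ρ)) μ := fun lam =>
    (hT_anti.measurable.comp (measurable_const_mul lam)).aestronglyMeasurable
  have hconv : Tendsto (fun lam => ∫ ρ, k ρ * T (lam * ρ) ∂μ) atTop
      (𝓝 (∫ ρ, k ρ * limsup σ atTop ∂μ)) := by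
    refine tendsto_integral_filter_of_dominated_convergence (fun ρ => k ρ * M)
      (Eventually.of_forall fun lam => hk.aestronglyMeasurable.mul (hT_meas lam))
      (Eventually.of_forall fun lam => ?_) (hk.mul_const M) ?_
    · filter_upwards [hk_nonneg] with ρ hρ
      rw [norm_mul, Real.norm_of_nonneg hρ]
      exact mul_le_mul_of_nonneg_left (hT_norm _) hρ
    · filter_upwards [hpos] with ρ hρ
      exact ((tendsto_ciSup_Ici_limsup hσ_above ⟨0, forall_mem_range.2 hσ_nonneg⟩).comp
        (tendsto_id.atTop_mul_const hρ)).const_mul (k ρ)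
  rw [integral_mul_const] at hconv
  have hle : ∀ lam, ∫ ρ, k ρ * σ (lam * ρ) ∂μ ≤ ∫ ρ, k ρ * T (lam * ρ) ∂μ := fun lam =>
    integral_mono_of_nonneg (hk_nonneg.mono fun ρ hρ => mul_nonneg hρ (hσ_nonneg _))
      (hk.mul_bdd (hT_meas lam) (Eventually.of_forall fun ρ => hT_norm _))
      (hk_nonneg.mono fun ρ hρ => mul_le_mul_of_nonneg_left (hσT _) hρ)
  have hcobdd : IsCoboundedUnder (· ≤ ·) atTop fun lam => ∫ ρ, k ρ * σ (lam * ρ) ∂μ :=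
    isCoboundedUnder_le_of_le atTop fun lam =>
      integral_nonneg_of_ae (hk_nonneg.mono fun ρ hρ => mul_nonneg hρ (hσ_nonneg _))
  exact (limsup_le_limsup (Eventually.of_forall hle) hcobdd hconv.isBoundedUnder_le).trans
    hconv.limsup_eq.le

theorem lintegral_setLIntegral_Ioi_dist {X : Type*} [PseudoMetricSpace X] [MeasurableSpace X]
    [OpensMeasurableSpace X] (ν : Measure X) [SFinite ν] (o : X) {g : ℝ → ℝ≥0∞}
    (hg : Measurable g) :
    ∫⁻ x, (∫⁻ r in Ioi (dist o x), g r) ∂ν = ∫⁻ r in Ioi 0, g r * ν (ball o r) := by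
  have hinner : ∀ x,
      ∫⁻ r in Ioi (dist o x), g r = ∫⁻ r in Ioi 0, (Ioi (dist o x)).indicator g r := fun x => by
    rw [lintegral_indicator measurableSet_Ioi, Measure.restrict_restrict measurableSet_Ioi,
      inter_eq_self_of_subset_left (Ioi_subset_Ioi dist_nonneg)]
  have hmeas : Measurable (Function.uncurry fun x r => (Ioi (dist o x)).indicator g r) := by
    have hset : MeasurableSet {p : X × ℝ | dist o p.1 < p.2} :=
      measurableSet_lt ((continuous_const.dist continuous_id).measurable.comp measurable_fst)
        measurable_snd
    exact (hg.comp measurable_snd).indicator hset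
  have hball : ∀ r, ∫⁻ x, (Ioi (dist o x)).indicator g r ∂ν = g r * ν (ball o r) := fun r => by
    have : ∀ x, (Ioi (dist o x)).indicator g r = (ball o r).indicator (fun _ => g r) x :=
      fun x => by by_cases h : dist o x < r <;> simp [indicator, h, mem_ball, dist_comm]
    rw [lintegral_congr this, lintegral_indicator_const measurableSet_ball]
  simp_rw [hinner]
  rw [lintegral_lintegral_swap hmeas.aemeasurable]
  simp_rw [hball]

theorem sigmaFinite_of_measure_ball_lt_top {X : Type*} [PseudoMetricSpace X] [MeasurableSpace X]
    {ν : Measure X} (o : X) (h : ∀ r : ℕ, ν (ball o r) < ∞) : SigmaFinite ν :=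
  Measure.sigmaFinite_of_countable (countable_range fun r : ℕ => ball o r) (forall_mem_range.2 h)
    (by rw [sUnion_range, iUnion_ball_nat])

-- `testFnSq n lam (d(o,x))` is `f_λ(x)²`.
noncomputable def testFnSq (n : ℕ) (lam t : ℝ) : ℝ :=
  lam ^ (n - 2) * ((lam ^ 2 + t ^ 2) ^ (n - 2))⁻¹

noncomputable def negDerivTestFnSq (n : ℕ) (lam r : ℝ) : ℝ :=
  2 * ((n : ℝ) - 2) * lam ^ (n - 2) * r * ((lam ^ 2 + r ^ 2) ^ (n - 1))⁻¹

section TestFnSq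

variable {n : ℕ} {lam : ℝ}

theorem continuous_testFnSq (hlam : 0 < lam) : Continuous (testFnSq n lam) := by
  unfold testFnSq
  fun_prop (disch := intro; positivity)

theorem continuous_negDerivTestFnSq (hlam : 0 < lam) : Continuous (negDerivTestFnSq n lam) := by
  unfold negDerivTestFnSq
  fun_prop (disch := intro; positivity)

theorem hasDerivAt_testFnSq (hn : 3 ≤ n) (hlam : 0 < lam) (r : ℝ) :
    HasDerivAt (fun t => -testFnSq n lam t) (negDerivTestFnSq n lam r) r := by
  obtain ⟨m, rfl⟩ := Nat.exists_eq_add_of_le' hn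
  have hu : lam ^ 2 + r ^ 2 ≠ 0 := by positivity
  have h : HasDerivAt (fun t => -(lam ^ (m + 1) * ((lam ^ 2 + t ^ 2) ^ (m + 1))⁻¹)) _ r :=
    ((((hasDerivAt_pow 2 r).const_add (lam ^ 2)).pow (m + 1)).inv (pow_ne_zero _ hu)).const_mul
      (lam ^ (m + 1)) |>.neg
  refine h.congr_deriv ?_
  simp only [negDerivTestFnSq, Pi.pow_apply, show m + 3 - 2 = m + 1 by omega,
    show m + 3 - 1 = m + 2 by omega]
  push_cast
  field_simp
  ring

theorem negDerivTestFnSq_nonneg (hn : 3 ≤ n) (hlam : 0 < lam) {r : ℝ} (hr : 0 ≤ r) :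
    0 ≤ negDerivTestFnSq n lam r := by
  have : (0 : ℝ) ≤ n - 2 := by
    rw [sub_nonneg]; exact_mod_cast (by omega : 2 ≤ n)
  unfold negDerivTestFnSq
  positivity

theorem tendsto_testFnSq_atTop (hn : 3 ≤ n) (lam : ℝ) :
    Tendsto (testFnSq n lam) atTop (𝓝 0) := by
  have h := ((tendsto_pow_atTop (by omega : n - 2 ≠ 0)).comp
    (tendsto_atTop_add_const_left atTop (lam ^ 2) (tendsto_pow_atTop two_ne_zero)))
  unfold testFnSq
  simpa using h.inv_tendsto_atTop.const_mul (lam ^ (n - 2))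

theorem ofReal_testFnSq_eq_lintegral (hn : 3 ≤ n) (hlam : 0 < lam) {t : ℝ} (ht : 0 ≤ t) :
    ENNReal.ofReal (testFnSq n lam t) =
      ∫⁻ r in Ioi t, ENNReal.ofReal (negDerivTestFnSq n lam r) := by
  have hderiv : ∀ r ∈ Ici t, HasDerivAt (fun t => -testFnSq n lam t) (negDerivTestFnSq n lam r) r :=
    fun r _ => hasDerivAt_testFnSq hn hlam r
  have hnonneg : ∀ r ∈ Ioi t, 0 ≤ negDerivTestFnSq n lam r := fun r hr =>
    negDerivTestFnSq_nonneg hn hlam (ht.trans hr.le)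
  have hlim : Tendsto (fun t => -testFnSq n lam t) atTop (𝓝 0) := by
    simpa using (tendsto_testFnSq_atTop hn lam).neg
  rw [← ofReal_integral_eq_lintegral_ofReal (integrableOn_Ioi_deriv_of_nonneg' hderiv hnonneg hlim)
    ((ae_restrict_iff' measurableSet_Ioi).2 (ae_of_all _ hnonneg)),
    integral_Ioi_of_hasDerivAt_of_nonneg' hderiv hnonneg hlim, zero_sub, neg_neg]

theorem integral_negDerivTestFnSq_mul (hn : 2 ≤ n) (hlam : 0 < lam) (A : ℝ → ℝ) :
    ∫ r in Ioi 0, negDerivTestFnSq n lam r * A r =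
      ∫ ρ in Ioi 0, 2 * ((n : ℝ) - 2) * (ρ ^ (n - 1) * ((1 + ρ ^ 2) ^ (n - 1))⁻¹) *
        ((lam * ρ) ^ ((2 : ℝ) - n) * A (lam * ρ)) := by
  obtain ⟨m, rfl⟩ := Nat.exists_eq_add_of_le' hn
  have h := integral_comp_mul_left_Ioi (fun r => negDerivTestFnSq (m + 2) lam r * A r) 0 hlam
  rw [mul_zero, smul_eq_mul, eq_inv_mul_iff_mul_eq₀ hlam.ne', ← integral_const_mul] at h
  rw [← h]
  refine setIntegral_congr_fun measurableSet_Ioi fun ρ (hρ : 0 < ρ) => ?_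
  have hrpow : (lam * ρ) ^ ((2 : ℝ) - ↑(m + 2)) = ((lam * ρ) ^ m)⁻¹ := by
    rw [show (2 : ℝ) - ↑(m + 2) = -(m : ℝ) by push_cast; ring, Real.rpow_neg (by positivity),
      Real.rpow_natCast]
  simp only [negDerivTestFnSq, hrpow, Nat.add_sub_cancel, show m + 2 - 1 = m + 1 by omega]
  have h1 : lam ^ 2 + (lam * ρ) ^ 2 = lam ^ 2 * (1 + ρ ^ 2) := by ring
  rw [h1, mul_pow, ← pow_mul]
  push_cast
  field_simp
  ring

end TestFnSq

theorem integrable_pow_mul_inv_one_add_sq_pow {n : ℕ} (hn : 3 ≤ n) :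
    Integrable fun ρ : ℝ => ρ ^ (n - 1) * ((1 + ρ ^ 2) ^ (n - 1))⁻¹ := by
  refine integrable_inv_one_add_sq.mono' (by fun_prop) (Eventually.of_forall fun ρ => ?_)
  have hpos : 0 < 1 + ρ ^ 2 := by positivity
  have ht : |ρ| / (1 + ρ ^ 2) ≤ 1 := by
    rw [div_le_one hpos]; nlinarith [abs_nonneg ρ, sq_abs ρ, two_mul_le_add_sq (|ρ|) 1]
  calc ‖ρ ^ (n - 1) * ((1 + ρ ^ 2) ^ (n - 1))⁻¹‖ = (|ρ| / (1 + ρ ^ 2)) ^ (n - 1) := by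
        rw [Real.norm_eq_abs, abs_mul, abs_inv, abs_pow, abs_pow, abs_of_pos hpos, div_pow,
          div_eq_mul_inv]
    _ ≤ (|ρ| / (1 + ρ ^ 2)) ^ 2 := pow_le_pow_of_le_one (by positivity) ht (by omega)
    _ ≤ (1 + ρ ^ 2)⁻¹ := by
        rw [div_pow, sq_abs, ← one_div, div_le_div_iff₀ (by positivity) hpos]
        nlinarith

theorem integral_testFnSq_dist_mul {X : Type*} [PseudoMetricSpace X] [MeasurableSpace X]
    [OpensMeasurableSpace X] {μ : Measure X} {o : X} {S : X → ℝ} (hS_meas : Measurable S)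
    (hS_nonneg : ∀ x, 0 ≤ S x) (hS_int : ∀ r, IntegrableOn S (ball o r) μ) {n : ℕ} (hn : 3 ≤ n)
    {lam : ℝ} (hlam : 0 < lam) :
    ∫ x, testFnSq n lam (dist o x) * S x ∂μ =
      ∫ r in Ioi 0, negDerivTestFnSq n lam r * ∫ x in ball o r, S x ∂μ := by
  set ν := μ.withDensity fun x => ENNReal.ofReal (S x)
  have hν_ball : ∀ r, ν (ball o r) = ENNReal.ofReal (∫ x in ball o r, S x ∂μ) := fun r => by
    rw [withDensity_apply _ measurableSet_ball,
      ofReal_integral_eq_lintegral_ofReal (hS_int r) (ae_of_all _ hS_nonneg)]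
  have : SigmaFinite ν := sigmaFinite_of_measure_ball_lt_top o fun r => by
    rw [hν_ball]; exact ENNReal.ofReal_lt_top
  have hA_mono : Monotone fun r => ∫ x in ball o r, S x ∂μ := fun r r' h =>
    setIntegral_mono_set (hS_int r') (ae_of_all _ hS_nonneg) (ball_subset_ball h).eventuallyLE
  have htest_cont : Continuous fun x => testFnSq n lam (dist o x) :=
    (continuous_testFnSq hlam).comp (continuous_const.dist continuous_id)
  have htest_nonneg : ∀ t, 0 ≤ testFnSq n lam t := fun t => by unfold testFnSq; positivity
  rw [integral_eq_lintegral_of_nonneg_ae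
      (ae_of_all _ fun x => mul_nonneg (htest_nonneg _) (hS_nonneg x))
      (htest_cont.measurable.mul hS_meas).aestronglyMeasurable,
    integral_eq_lintegral_of_nonneg_ae
      ((ae_restrict_iff' measurableSet_Ioi).2 (ae_of_all _ fun r (hr : 0 < r) =>
        mul_nonneg (negDerivTestFnSq_nonneg hn hlam hr.le) (integral_nonneg hS_nonneg)))
      ((continuous_negDerivTestFnSq hlam).measurable.mul
        hA_mono.measurable).aestronglyMeasurable]
  congr 1
  calc ∫⁻ x, ENNReal.ofReal (testFnSq n lam (dist o x) * S x) ∂μ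
      = ∫⁻ x, ENNReal.ofReal (testFnSq n lam (dist o x)) ∂ν := by
        rw [lintegral_withDensity_eq_lintegral_mul _ hS_meas.ennreal_ofReal
          htest_cont.measurable.ennreal_ofReal]
        refine lintegral_congr fun x => ?_
        rw [ENNReal.ofReal_mul (htest_nonneg _), mul_comm]
        rfl
    _ = ∫⁻ x, (∫⁻ r in Ioi (dist o x), ENNReal.ofReal (negDerivTestFnSq n lam r)) ∂ν :=
        lintegral_congr fun x => ofReal_testFnSq_eq_lintegral hn hlam dist_nonneg
    _ = ∫⁻ r in Ioi 0, ENNReal.ofReal (negDerivTestFnSq n lam r) * ν (ball o r) :=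
        lintegral_setLIntegral_Ioi_dist ν o
          (continuous_negDerivTestFnSq hlam).measurable.ennreal_ofReal
    _ = ∫⁻ r in Ioi 0, ENNReal.ofReal (negDerivTestFnSq n lam r * ∫ x in ball o r, S x ∂μ) :=
        setLIntegral_congr_fun measurableSet_Ioi fun r (hr : 0 < r) => by
          rw [hν_ball, ENNReal.ofReal_mul (negDerivTestFnSq_nonneg hn hlam hr.le)]

/-- If `Σ(r) = r^{2-n} ∫_{B(o,r)} S dμ` is bounded on `(0,∞)`, then
`limsup_{λ→∞} ∫ λ^{n-2} (λ²+d(o,x)²)^{-(n-2)} S dμ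
  ≤ 2(n-2) (∫₀^∞ ρ^{n-1}(1+ρ²)^{-(n-1)} dρ) · limsup_{r→∞} Σ(r)`. -/
theorem stmt_12 {X : Type*} [MetricSpace X] [MeasurableSpace X] [BorelSpace X]
    (μ : Measure X) (o : X) (n : ℕ) (hn : 3 ≤ n) (S : X → ℝ)
    (hSmeas : Measurable S) (hSnonneg : ∀ x, 0 ≤ S x)
    (hSint : ∀ r > (0:ℝ), IntegrableOn S (Metric.ball o r) μ)
    (hbdd : ∃ M : ℝ, ∀ r > (0:ℝ),
      r ^ ((2 : ℝ) - n) * ∫ x in Metric.ball o r, S x ∂μ ≤ M) :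
    limsup (fun lam : ℝ =>
        ∫ x, lam ^ (n - 2) * ((lam ^ 2 + dist o x ^ 2) ^ (n - 2))⁻¹ * S x ∂μ) atTop
      ≤ 2 * ((n : ℝ) - 2) * (∫ ρ in Ioi (0:ℝ), ρ ^ (n - 1) * ((1 + ρ ^ 2) ^ (n - 1))⁻¹) *
          limsup (fun r : ℝ =>
            r ^ ((2 : ℝ) - n) * ∫ x in Metric.ball o r, S x ∂μ) atTop := by
  obtain ⟨M, hM⟩ := hbdd
  have hball_nonpos : ∀ r ≤ 0, ∫ x in ball o r, S x ∂μ = 0 := fun r hr => by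
    rw [ball_eq_empty.2 hr, Measure.restrict_empty, integral_zero_measure]
  have hS_int : ∀ r, IntegrableOn S (ball o r) μ := fun r =>
    (le_or_gt r 0).elim (fun hr => by rw [ball_eq_empty.2 hr]; exact integrableOn_empty) (hSint r)
  have hσ_nonneg : ∀ r, 0 ≤ r ^ ((2 : ℝ) - n) * ∫ x in ball o r, S x ∂μ := fun r =>
    (le_or_gt r 0).elim (fun hr => by rw [hball_nonpos r hr, mul_zero])
      fun hr => mul_nonneg (Real.rpow_nonneg hr.le _) (integral_nonneg hSnonneg)
  have hσ_le : ∀ r, r ^ ((2 : ℝ) - n) * ∫ x in ball o r, S x ∂μ ≤ M := fun r =>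
    (le_or_gt r 0).elim
      (fun hr => by rw [hball_nonpos r hr, mul_zero]; exact (hσ_nonneg 1).trans (hM 1 one_pos))
      (hM r)
  have hk : Integrable
      (fun ρ : ℝ => 2 * ((n : ℝ) - 2) * (ρ ^ (n - 1) * ((1 + ρ ^ 2) ^ (n - 1))⁻¹))
      (volume.restrict (Ioi 0)) :=
    ((integrable_pow_mul_inv_one_add_sq_pow hn).const_mul _).restrict
  have hk_nonneg : ∀ ρ ∈ Ioi (0 : ℝ),
      0 ≤ 2 * ((n : ℝ) - 2) * (ρ ^ (n - 1) * ((1 + ρ ^ 2) ^ (n - 1))⁻¹) := fun ρ (hρ : 0 < ρ) => by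
      have : (0 : ℝ) ≤ n - 2 := by rw [sub_nonneg]; exact_mod_cast (by omega : 2 ≤ n)
      positivity
  calc _ = limsup (fun lam : ℝ => ∫ ρ in Ioi 0,
          2 * ((n : ℝ) - 2) * (ρ ^ (n - 1) * ((1 + ρ ^ 2) ^ (n - 1))⁻¹) *
            ((lam * ρ) ^ ((2 : ℝ) - n) * ∫ x in ball o (lam * ρ), S x ∂μ)) atTop :=
        limsup_congr <| (eventually_gt_atTop 0).mono fun lam hlam =>
          (integral_testFnSq_dist_mul hSmeas hSnonneg hS_int hn hlam).trans
            (integral_negDerivTestFnSq_mul (by omega) hlam _)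
    _ ≤ _ := limsup_integral_mul_comp_mul_le
        (σ := fun r => r ^ ((2 : ℝ) - n) * ∫ x in ball o r, S x ∂μ) hk
        ((ae_restrict_iff' measurableSet_Ioi).2 (ae_of_all _ hk_nonneg))
        (ae_restrict_mem measurableSet_Ioi) hσ_nonneg hσ_le
    _ = _ := by rw [integral_const_mul]
end

section
/- For every natural number n ≥ 7, ((n−2)/n) · ( 2·n·ω_n/(48(n−2)(n−6)) ) · ( ∫₀^∞ ρ^{n+5}·(1+ρ²)^{−(n+1)} dρ ) · (2^{−n}·σ_n)^{−2/n} > σ_n^{−2/n} · ( 4/(n(n−2)) ) · ( σ_{n−1}·(n−2)²/(192·n·(n−1)) ) · ( ∫₀^∞ ρ^{n+1}·(1+ρ²)^{−n} dρ ), where ω_n = π^{n/2}/Γ(n/2+1), σ_{n−1} = 2π^{n/2}/Γ(n/2), σ_n = 2π^{(n+1)/2}/Γ((n+1)/2). Equivalently, 8·n·(n−1)·∫₀^∞ ρ^{n+5}(1+ρ²)^{−(n+1)} dρ > (n−2)(n−6)·∫₀^∞ ρ^{n+1}(1+ρ²)^{−n} dρ, which reduces to 4(n−1)(n+2)(n+4)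 > (n−2)(n−4)(n−6). -/
/-!
Write `J(a, b) = ∫₀^∞ ρ^a (1 + ρ²)^{-b} dρ` (`bubbleMoment a b`). Integrating the derivative of
`ρ^{a+1} (1 + ρ²)^{-b}` over `(0, ∞)` gives `(a + 1) J(a, b) = 2b J(a + 2, b + 1)`, and
`ρ^{a+2} + ρ^a = ρ^a (1 + ρ²)` gives `J(a + 2, b + 1) + J(a, b + 1) = J(a, b)`. Together they yield
`2n(n - 4) J(n + 5, n + 1) = (n + 2)(n + 4) J(n + 1, n)`, which turns the integral inequality into
the cubic one `4(n - 1)(n + 2)(n + 4) > (n - 2)(n - 4)(n - 6)`. The `λ⁴`-coefficient inequality is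
a positive multiple of the integral one, once `σ_{n-1} = n ω_n` and
`(2^{-n} σ)^{-2/n} = 4 σ^{-2/n}` are used.
-/

open Set Filter MeasureTheory

noncomputable def bubbleMoment (a b : ℕ) : ℝ :=
  ∫ ρ in Ioi (0 : ℝ), ρ ^ a * ((1 + ρ ^ 2) ^ b)⁻¹

lemma pow_mul_inv_one_add_sq_pow_le_rpow (a b : ℕ) {x : ℝ} (hx : 0 < x) :
    x ^ a * ((1 + x ^ 2) ^ b)⁻¹ ≤ x ^ ((a : ℝ) - 2 * b) := by
  rw [show (a : ℝ) - 2 * b = (a : ℕ) - (2 * b : ℕ) by push_cast; ring, Real.rpow_sub hx,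
    Real.rpow_natCast, Real.rpow_natCast, div_eq_mul_inv, pow_mul]
  gcongr
  linarith [sq_nonneg x]

lemma continuous_pow_mul_inv_one_add_sq_pow (a b : ℕ) :
    Continuous fun ρ : ℝ => ρ ^ a * ((1 + ρ ^ 2) ^ b)⁻¹ :=
  (continuous_pow a).mul <| Continuous.inv₀ (by fun_prop) fun x => by positivity

lemma integrableOn_pow_mul_inv_one_add_sq_pow {a b : ℕ} (h : a + 1 < 2 * b) :
    IntegrableOn (fun ρ : ℝ => ρ ^ a * ((1 + ρ ^ 2) ^ b)⁻¹) (Ioi 0) := by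
  have hc := continuous_pow_mul_inv_one_add_sq_pow a b
  have near_zero : IntegrableOn (fun ρ : ℝ => ρ ^ a * ((1 + ρ ^ 2) ^ b)⁻¹) (Ioc 0 1) :=
    (hc.integrableOn_Icc (a := 0) (b := 1)).mono_set Ioc_subset_Icc_self
  have near_infty : IntegrableOn (fun ρ : ℝ => ρ ^ a * ((1 + ρ ^ 2) ^ b)⁻¹) (Ioi 1) := by
    have hlt : (a : ℝ) - 2 * b < -1 := by
      have : (a : ℝ) + 1 < 2 * b := by exact_mod_cast h
      linarith
    refine (integrableOn_Ioi_rpow_of_lt hlt one_pos).mono' hc.aestronglyMeasurable.restrict ?_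
    filter_upwards [ae_restrict_mem measurableSet_Ioi] with x (hx : 1 < x)
    rw [Real.norm_of_nonneg (by positivity)]
    exact pow_mul_inv_one_add_sq_pow_le_rpow a b (by linarith)
  rw [← Ioc_union_Ioi_eq_Ioi zero_le_one]
  exact near_zero.union near_infty

lemma tendsto_pow_mul_inv_one_add_sq_pow {a b : ℕ} (h : a < 2 * b) :
    Tendsto (fun ρ : ℝ => ρ ^ a * ((1 + ρ ^ 2) ^ b)⁻¹) atTop (nhds 0) := by
  have hneg : 0 < -((a : ℝ) - 2 * b) := by
    have : (a : ℝ) < 2 * b := by exact_mod_cast h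
    linarith
  refine squeeze_zero' ?_ ?_ (by simpa using tendsto_rpow_neg_atTop hneg)
  · filter_upwards [eventually_gt_atTop 0] with x hx
    positivity
  · filter_upwards [eventually_gt_atTop 0] with x hx
    exact pow_mul_inv_one_add_sq_pow_le_rpow a b hx

lemma hasDerivAt_pow_succ_mul_inv_one_add_sq_pow (a b : ℕ) (x : ℝ) :
    HasDerivAt (fun ρ : ℝ => ρ ^ (a + 1) * ((1 + ρ ^ 2) ^ (b + 1))⁻¹)
      (((a : ℝ) + 1) * (x ^ a * ((1 + x ^ 2) ^ (b + 1))⁻¹)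
        - 2 * ((b : ℝ) + 1) * (x ^ (a + 2) * ((1 + x ^ 2) ^ (b + 2))⁻¹)) x := by
  have hpos : (0 : ℝ) < 1 + x ^ 2 := by positivity
  have hden := (((hasDerivAt_pow 2 x).const_add 1).fun_pow (b + 1)).fun_inv (by positivity)
  refine ((hasDerivAt_pow (a + 1) x).fun_mul hden).congr_deriv ?_
  simp only [Nat.add_sub_cancel]
  field_simp
  push_cast
  ring

lemma bubbleMoment_eq_mul_bubbleMoment_add_two_succ {a b : ℕ} (h : a + 1 < 2 * b) :
    ((a : ℝ) + 1) * bubbleMoment a b = 2 * b * bubbleMoment (a + 2) (b + 1) := by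
  obtain ⟨k, rfl⟩ : ∃ k, b = k + 1 := ⟨b - 1, by omega⟩
  have hI := integrableOn_pow_mul_inv_one_add_sq_pow h
  have hI' := integrableOn_pow_mul_inv_one_add_sq_pow (a := a + 2) (b := k + 2) (by omega)
  have parts := integral_Ioi_of_hasDerivAt_of_tendsto'
    (fun x _ => hasDerivAt_pow_succ_mul_inv_one_add_sq_pow a k x)
    ((hI.const_mul _).sub (hI'.const_mul _)) (tendsto_pow_mul_inv_one_add_sq_pow (by omega))
  rw [integral_sub (hI.const_mul _) (hI'.const_mul _), integral_const_mul,
    integral_const_mul] at parts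
  simp only [bubbleMoment]
  push_cast
  rw [zero_pow a.succ_ne_zero, zero_mul, sub_zero] at parts
  linarith

lemma bubbleMoment_add_two_add_bubbleMoment {a b : ℕ} (h : a + 1 < 2 * b) :
    bubbleMoment (a + 2) (b + 1) + bubbleMoment a (b + 1) = bubbleMoment a b := by
  rw [bubbleMoment, bubbleMoment,
    ← integral_add (integrableOn_pow_mul_inv_one_add_sq_pow (by omega))
      (integrableOn_pow_mul_inv_one_add_sq_pow (by omega))]
  refine setIntegral_congr_fun measurableSet_Ioi fun x _ => ?_
  have hpos : (0 : ℝ) < 1 + x ^ 2 := by positivity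
  field_simp
  ring

lemma mul_bubbleMoment_add_two {a b : ℕ} (h : a + 1 < 2 * b) :
    (2 * (b : ℝ) - a - 1) * bubbleMoment (a + 2) (b + 1) = (a + 1) * bubbleMoment a (b + 1) := by
  linear_combination -bubbleMoment_eq_mul_bubbleMoment_add_two_succ h -
    ((a : ℝ) + 1) * bubbleMoment_add_two_add_bubbleMoment h

lemma bubbleMoment_pos {a b : ℕ} (h : a + 1 < 2 * b) : 0 < bubbleMoment a b := by
  have hpos : ∀ x ∈ Ioi (0 : ℝ), 0 < x ^ a * ((1 + x ^ 2) ^ b)⁻¹ := fun x (hx : 0 < x) => by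
    positivity
  rw [bubbleMoment,
    setIntegral_pos_iff_support_of_nonneg_ae ?_ (integrableOn_pow_mul_inv_one_add_sq_pow h)]
  · rw [inter_eq_right.mpr fun x hx => Function.mem_support.mpr (hpos x hx).ne']
    simp
  · filter_upwards [ae_restrict_mem measurableSet_Ioi] with x hx using (hpos x hx).le

lemma mul_bubbleMoment_add_five_succ {n : ℕ} (hn : 5 ≤ n) :
    2 * (n : ℝ) * (n - 4) * bubbleMoment (n + 5) (n + 1)
      = ((n : ℝ) + 2) * (n + 4) * bubbleMoment (n + 1) n := by
  obtain ⟨m, rfl⟩ : ∃ m, n = m + 1 := ⟨n - 1, by omega⟩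
  have parts := bubbleMoment_eq_mul_bubbleMoment_add_two_succ (a := m + 4) (b := m + 1) (by omega)
  have split := mul_bubbleMoment_add_two (a := m + 2) (b := m) (by omega)
  push_cast at parts split ⊢
  linear_combination (-((m : ℝ) - 3)) * parts + ((m : ℝ) + 5) * split

lemma sub_two_mul_sub_four_mul_sub_six_lt {N : ℝ} (hN : 0 ≤ N) :
    (N - 2) * (N - 4) * (N - 6) < 4 * (N - 1) * (N + 2) * (N + 4) := by
  nlinarith [pow_nonneg hN 3, sq_nonneg (N - 9 / 16)]

lemma mul_bubbleMoment_lt_mul_bubbleMoment {n : ℕ} (hn : 5 ≤ n) :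
    ((n : ℝ) - 2) * (n - 6) * bubbleMoment (n + 1) n
      < 8 * (n : ℝ) * (n - 1) * bubbleMoment (n + 5) (n + 1) := by
  have h5 : (5 : ℝ) ≤ n := by exact_mod_cast hn
  have hpos := bubbleMoment_pos (a := n + 1) (b := n) (by omega)
  refine lt_of_mul_lt_mul_left ?_ (by linarith : (0 : ℝ) ≤ 2 * (n - 4))
  calc 2 * ((n : ℝ) - 4) * (((n : ℝ) - 2) * (n - 6) * bubbleMoment (n + 1) n)
      = 2 * (((n : ℝ) - 2) * (n - 4) * (n - 6)) * bubbleMoment (n + 1) n := by ring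
    _ < 2 * (4 * ((n : ℝ) - 1) * (n + 2) * (n + 4)) * bubbleMoment (n + 1) n := by
      gcongr ?_ * _
      exact mul_lt_mul_of_pos_left (sub_two_mul_sub_four_mul_sub_six_lt n.cast_nonneg) two_pos
    _ = 2 * ((n : ℝ) - 4) * (8 * n * (n - 1) * bubbleMoment (n + 5) (n + 1)) := by
      linear_combination (-8 * ((n : ℝ) - 1)) * mul_bubbleMoment_add_five_succ hn

lemma two_mul_pi_rpow_div_Gamma {N : ℝ} (hN : 0 < N) :
    2 * Real.pi ^ (N / 2) / Real.Gamma (N / 2)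
      = N * (Real.pi ^ (N / 2) / Real.Gamma (N / 2 + 1)) := by
  have hΓ := Real.Gamma_pos_of_pos (half_pos hN)
  rw [Real.Gamma_add_one (half_pos hN).ne']
  field_simp

lemma two_rpow_neg_mul_rpow_neg_two_div {N S : ℝ} (hN : N ≠ 0) (hS : 0 ≤ S) :
    (2 ^ (-N) * S) ^ (-2 / N) = 4 * S ^ (-2 / N) := by
  rw [Real.mul_rpow (by positivity) hS, ← Real.rpow_mul zero_le_two,
    show -N * (-2 / N) = 2 by field_simp]
  norm_num

lemma lambda4_coeff_lt_of_integral_lt {N ω P I₁ I₂ : ℝ} (hN : 6 < N) (hω : 0 < ω) (hP : 0 < P)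
    (h : (N - 2) * (N - 6) * I₂ < 8 * N * (N - 1) * I₁) :
    P * (4 / (N * (N - 2))) * (N * ω * (N - 2) ^ 2 / (192 * N * (N - 1))) * I₂
      < (N - 2) / N * (2 * N * ω / (48 * (N - 2) * (N - 6))) * I₁ * (4 * P) := by
  have hC : 0 < ω * P / (48 * N * (N - 1) * (N - 6)) :=
    div_pos (mul_pos hω hP) (mul_pos (mul_pos (by linarith) (by linarith)) (by linarith))
  have hN2 : N - 2 ≠ 0 := by linarith
  have hN6 : N - 6 ≠ 0 := by linarith
  have hN1 : N - 1 ≠ 0 := by linarith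
  have hN0 : N ≠ 0 := by linarith
  calc P * (4 / (N * (N - 2))) * (N * ω * (N - 2) ^ 2 / (192 * N * (N - 1))) * I₂
      = ω * P / (48 * N * (N - 1) * (N - 6)) * ((N - 2) * (N - 6) * I₂) := by
        field_simp
        ring
    _ < ω * P / (48 * N * (N - 1) * (N - 6)) * (8 * N * (N - 1) * I₁) :=
        mul_lt_mul_of_pos_left h hC
    _ = (N - 2) / N * (2 * N * ω / (48 * (N - 2) * (N - 6))) * I₁ * (4 * P) := by
        field_simp
        ring

/-- The strict inequality `(1-2/n) c_n A_n^{-2/n} > K(n,2)² b_n` between the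
`λ⁴`-coefficients in the proof of Theorem C, its equivalent integral form, and the
arithmetic inequality it reduces to. -/
theorem stmt_17 (n : ℕ) (hn : 7 ≤ n) :
    (((n : ℝ) - 2) / (n : ℝ)) *
        (2 * (n : ℝ) * (Real.pi ^ ((n : ℝ) / 2) / Real.Gamma ((n : ℝ) / 2 + 1)) /
          (48 * ((n : ℝ) - 2) * ((n : ℝ) - 6))) *
        (∫ ρ in Ioi (0:ℝ), ρ ^ (n + 5) * ((1 + ρ ^ 2) ^ (n + 1))⁻¹) *
        (2 ^ (-(n : ℝ)) *
          (2 * Real.pi ^ (((n : ℝ) + 1) / 2) / Real.Gamma (((n : ℝ) + 1) / 2)))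
            ^ (-2 / (n : ℝ))
      > (2 * Real.pi ^ (((n : ℝ) + 1) / 2) / Real.Gamma (((n : ℝ) + 1) / 2)) ^ (-2 / (n : ℝ)) *
          (4 / ((n : ℝ) * ((n : ℝ) - 2))) *
          ((2 * Real.pi ^ ((n : ℝ) / 2) / Real.Gamma ((n : ℝ) / 2)) * ((n : ℝ) - 2) ^ 2 /
            (192 * (n : ℝ) * ((n : ℝ) - 1))) *
          (∫ ρ in Ioi (0:ℝ), ρ ^ (n + 1) * ((1 + ρ ^ 2) ^ n)⁻¹) ∧
    8 * (n : ℝ) * ((n : ℝ) - 1) *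
        (∫ ρ in Ioi (0:ℝ), ρ ^ (n + 5) * ((1 + ρ ^ 2) ^ (n + 1))⁻¹)
      > ((n : ℝ) - 2) * ((n : ℝ) - 6) *
        (∫ ρ in Ioi (0:ℝ), ρ ^ (n + 1) * ((1 + ρ ^ 2) ^ n)⁻¹) ∧
    4 * ((n : ℝ) - 1) * ((n : ℝ) + 2) * ((n : ℝ) + 4)
      > ((n : ℝ) - 2) * ((n : ℝ) - 4) * ((n : ℝ) - 6) := by
  have h7 : (7 : ℝ) ≤ n := by exact_mod_cast hn
  have hint := mul_bubbleMoment_lt_mul_bubbleMoment (n := n) (by omega)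
  refine ⟨?_, hint, sub_two_mul_sub_four_mul_sub_six_lt n.cast_nonneg⟩
  have hσ : 0 < 2 * Real.pi ^ (((n : ℝ) + 1) / 2) / Real.Gamma (((n : ℝ) + 1) / 2) := by
    have := Real.Gamma_pos_of_pos (by positivity : (0 : ℝ) < ((n : ℝ) + 1) / 2)
    positivity
  rw [two_rpow_neg_mul_rpow_neg_two_div (by positivity) hσ.le,
    two_mul_pi_rpow_div_Gamma (N := n) (by positivity)]
  have hω : 0 < Real.pi ^ ((n : ℝ) / 2) / Real.Gamma ((n : ℝ) / 2 + 1) := by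
    have := Real.Gamma_pos_of_pos (by positivity : (0 : ℝ) < (n : ℝ) / 2 + 1)
    positivity
  exact lambda4_coeff_lt_of_integral_lt (by linarith) hω (Real.rpow_pos_of_pos hσ _) hint
end
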